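/- arXiv:2308.12752 — 8 statements merged into one kernel-verified Lean document; each statement's English description precedes it below -/
import Mathlib

section
/- Let n ≥ 1 and let Θ : M_n × M_n → M_n be bilinear over ℂ, written (ρ, M) ↦ Θ_ρ(M). Assume: (i) for all ρ, M ∈ M_n with ρM = Mρ one has Θ_ρ(M) = ρM; (ii) for every ρ ∈ M_n, Θ_ρ‡ = Θ_ρ, where Θ_ρ‡(M) := (Θ_ρ†(M†))† and Θ_ρ† is the adjoint of the linear map M ↦ Θ_ρ(M) with respect to the Hilbert–Schmidt inner product. Then Θ_ρ(M) = ½(ρM + Mρ) for all ρ, M ∈ M_n. -/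
open Matrix Kronecker BigOperators ComplexOrder

/-- `Mat n` is the algebra `M_n(ℂ)` of `n × n` complex matrices. -/
abbrev Mat (n : ℕ) : Type := Matrix (Fin n) (Fin n) ℂ

/-- The adjoint of a (linear) map `L : M_n → M_n` with respect to the
Hilbert–Schmidt inner product `⟨X, Y⟩ = Tr(Xᴴ * Y)`. -/
noncomputable def hsAdj {n : ℕ} (L : Mat n → Mat n) : Mat n → Mat n :=
  fun Y => Matrix.of fun i j => Matrix.trace ((L (Matrix.single i j (1 : ℂ)))ᴴ * Y)

/-- The swap operator `F = Σ_{i,j} E_{ij} ⊗ E_{ji} ∈ M_n ⊗ M_n`. -/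
noncomputable def swapOp (n : ℕ) : Matrix (Fin n × Fin n) (Fin n × Fin n) ℂ :=
  Matrix.of fun p q => if p.1 = q.2 ∧ p.2 = q.1 then (1 : ℂ) else 0

/-- `(id ⊗ E)(X)`: apply `E : M_a → M_b` to the second tensor factor. -/
noncomputable def idT {α : Type} {a b : ℕ} (E : Mat a → Mat b)
    (X : Matrix (α × Fin a) (α × Fin a) ℂ) : Matrix (α × Fin b) (α × Fin b) ℂ :=
  Matrix.of fun p q => E (Matrix.of fun x y => X (p.1, x) (q.1, y)) p.2 q.2

/-- `(L ⊗ id)(X)`: apply `L : M_a → M_b` to the first tensor factor. -/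
noncomputable def tId {α : Type} {a b : ℕ} (L : Mat a → Mat b)
    (X : Matrix (Fin a × α) (Fin a × α) ℂ) : Matrix (Fin b × α) (Fin b × α) ℂ :=
  Matrix.of fun p q => L (Matrix.of fun x y => X (x, p.2) (y, q.2)) p.1 q.1

/-- The Jamiołkowski channel state `D[E] := (id ⊗ E)(F)`. -/
noncomputable def chanState {a b : ℕ} (E : Mat a → Mat b) :
    Matrix (Fin a × Fin b) (Fin a × Fin b) ℂ := idT E (swapOp a)

/-- Partial trace over the second tensor factor. -/
noncomputable def ptraceR {α β : Type} [Fintype β] (X : Matrix (α × β) (α × β) ℂ) :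
    Matrix α α ℂ := Matrix.of fun i k => ∑ j, X (i, j) (k, j)

/-- Partial trace over the first tensor factor. -/
noncomputable def ptraceL {α β : Type} [Fintype α] (X : Matrix (α × β) (α × β) ℂ) :
    Matrix β β ℂ := Matrix.of fun j l => ∑ i, X (i, j) (i, l)

/-- The Fullwood–Parzygnat state over time function `E ⋆ ρ := ½{ρ ⊗ 1, D[E]}`. -/
noncomputable def FP {a b : ℕ} (E : Mat a → Mat b) (ρ : Mat a) :
    Matrix (Fin a × Fin b) (Fin a × Fin b) ℂ :=
  (1/2 : ℂ) • ((ρ ⊗ₖ (1 : Mat b)) * chanState E + chanState E * (ρ ⊗ₖ (1 : Mat b)))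

/-- An orthogonal projection: `P = P† = P²`. -/
def IsOrthProj {n : ℕ} (P : Mat n) : Prop := P.IsHermitian ∧ P * P = P

lemma aux_trace_stdBasisMatrix_mul {n : ℕ} (i j : Fin n) (X : Mat n) :
    Matrix.trace (Matrix.single i j (1:ℂ) * X) = X j i := by
  simp [Matrix.trace, Matrix.diag, Matrix.mul_apply, Matrix.single, ite_and,
    Finset.sum_ite_eq, Finset.sum_ite_eq']

lemma aux_tr_cyc {n : ℕ} (x y z : Mat n) :
    Matrix.trace (x * (y * z)) = Matrix.trace (z * (x * y)) := by
  rw [← mul_assoc, ← mul_assoc, Matrix.trace_mul_cycle]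

lemma aux_sum4 {n : ℕ} {M : Type*} [AddCommMonoid M] (f : Fin n → Fin n → Fin n → Fin n → M) :
    ∑ i, ∑ k, ∑ l, ∑ m, f i k l m = ∑ l, ∑ m, ∑ i, ∑ k, f i k l m := by
  have h := Finset.sum_comm (s := (Finset.univ : Finset (Fin n × Fin n)))
    (t := (Finset.univ : Finset (Fin n × Fin n)))
    (f := fun p q => f p.1 p.2 q.1 q.2)
  simpa [Fintype.sum_prod_type] using h

section mainAux
variable (n : ℕ) (Θ : Mat n → Mat n → Mat n)

lemma aux_entry (hT : ∀ ρ M : Mat n, (hsAdj (Θ ρ) Mᴴ)ᴴ = Θ ρ M)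
    (ρ M : Mat n) (i j : Fin n) :
    Θ ρ M i j = Matrix.trace (M * Θ ρ (Matrix.single j i (1:ℂ))) := by
  conv_lhs => rw [← hT ρ M]
  rw [Matrix.conjTranspose_apply]
  show star (Matrix.trace ((Θ ρ (Matrix.single j i (1:ℂ)))ᴴ * Mᴴ)) = _
  rw [← Matrix.conjTranspose_mul, Matrix.trace_conjTranspose, star_star]

lemma aux_traceExp (hT : ∀ ρ M : Mat n, (hsAdj (Θ ρ) Mᴴ)ᴴ = Θ ρ M)
    (ρ M N : Mat n) : Matrix.trace (N * Θ ρ M)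
    = ∑ i, ∑ k, N i k * Matrix.trace (M * Θ ρ (Matrix.single i k (1:ℂ))) := by
  rw [Matrix.trace]
  simp only [Matrix.diag, Matrix.mul_apply]
  refine Finset.sum_congr rfl fun i _ => Finset.sum_congr rfl fun k _ => ?_
  rw [aux_entry n Θ hT ρ M k i]

lemma aux_traceSym (hT : ∀ ρ M : Mat n, (hsAdj (Θ ρ) Mᴴ)ᴴ = Θ ρ M)
    (ρ M N : Mat n) :
    Matrix.trace (N * Θ ρ M) = Matrix.trace (M * Θ ρ N) := by
  have key : ∀ i k l m : Fin n,
      Matrix.trace (Matrix.single l m (1:ℂ) * Θ ρ (Matrix.single i k 1))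
      = Matrix.trace (Matrix.single i k (1:ℂ) * Θ ρ (Matrix.single l m 1)) := by
    intro i k l m
    rw [aux_trace_stdBasisMatrix_mul]
    exact aux_entry n Θ hT ρ (Matrix.single i k (1:ℂ)) m l
  calc Matrix.trace (N * Θ ρ M)
      = ∑ i, ∑ k, ∑ l, ∑ m, N i k * (M l m *
          Matrix.trace (Matrix.single i k (1:ℂ) * Θ ρ (Matrix.single l m 1))) := by
        rw [aux_traceExp n Θ hT ρ M N]
        refine Finset.sum_congr rfl fun i _ => Finset.sum_congr rfl fun k _ => ?_
        rw [aux_traceExp n Θ hT ρ (Matrix.single i k (1:ℂ)) M, Finset.mul_sum]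
        refine Finset.sum_congr rfl fun l _ => ?_
        rw [Finset.mul_sum]
    _ = ∑ l, ∑ m, ∑ i, ∑ k, M l m * (N i k *
          Matrix.trace (Matrix.single l m (1:ℂ) * Θ ρ (Matrix.single i k 1))) := by
        rw [aux_sum4]
        refine Finset.sum_congr rfl fun l _ => Finset.sum_congr rfl fun m _ =>
          Finset.sum_congr rfl fun i _ => Finset.sum_congr rfl fun k _ => ?_
        rw [key i k l m]; ring
    _ = Matrix.trace (M * Θ ρ N) := by
        rw [aux_traceExp n Θ hT ρ N M]
        refine Finset.sum_congr rfl fun l _ => Finset.sum_congr rfl fun m _ => ?_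
        rw [aux_traceExp n Θ hT ρ (Matrix.single l m (1:ℂ)) N, Finset.mul_sum]
        refine Finset.sum_congr rfl fun i _ => ?_
        rw [Finset.mul_sum]

lemma aux_jord (hlin_rho : ∀ M : Mat n, IsLinearMap ℂ fun ρ => Θ ρ M)
    (hlin_M : ∀ ρ : Mat n, IsLinearMap ℂ fun M => Θ ρ M)
    (hcomm : ∀ ρ M : Mat n, ρ * M = M * ρ → Θ ρ M = ρ * M) :
    ∀ a b : Mat n, Θ a b + Θ b a = a * b + b * a := by
  intro a b
  have h := hcomm (a + b) (a + b) rfl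
  rw [(hlin_rho (a+b)).map_add, (hlin_M a).map_add, (hlin_M b).map_add,
    hcomm a a rfl, hcomm b b rfl] at h
  have h2 : a*a + (Θ a b + Θ b a + b*b) = a*a + (a*b + b*a + b*b) := by
    rw [mul_add, add_mul, add_mul] at h
    linear_combination (norm := noncomm_ring) h
  exact add_right_cancel (add_left_cancel h2)

/-- The trilinear quantity `T a b c = Tr(c Θ_a(b)) - ½ Tr(c (ab+ba))`. -/
noncomputable def Taux (a b c : Mat n) : ℂ :=
  Matrix.trace (c * Θ a b) - (1/2 : ℂ) * Matrix.trace (c * (a * b + b * a))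

lemma aux_sym23 (hT : ∀ ρ M : Mat n, (hsAdj (Θ ρ) Mᴴ)ᴴ = Θ ρ M)
    (a b c : Mat n) : Taux n Θ a b c = Taux n Θ a c b := by
  unfold Taux
  rw [aux_traceSym n Θ hT a b c]
  congr 1
  rw [mul_add, mul_add, Matrix.trace_add, Matrix.trace_add,
    aux_tr_cyc c a b, aux_tr_cyc c b a, aux_tr_cyc a c b]
  ring

lemma aux_asym12 (hlin_rho : ∀ M : Mat n, IsLinearMap ℂ fun ρ => Θ ρ M)
    (hlin_M : ∀ ρ : Mat n, IsLinearMap ℂ fun M => Θ ρ M)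
    (hcomm : ∀ ρ M : Mat n, ρ * M = M * ρ → Θ ρ M = ρ * M)
    (a b c : Mat n) : Taux n Θ a b c = - Taux n Θ b a c := by
  have hj := aux_jord n Θ hlin_rho hlin_M hcomm a b
  have hsum : Matrix.trace (c * Θ a b) + Matrix.trace (c * Θ b a)
      = Matrix.trace (c * (a * b + b * a)) := by
    rw [← Matrix.trace_add, ← mul_add, hj]
  have e1 : Matrix.trace (c * (b * a + a * b)) = Matrix.trace (c * (a * b + b * a)) := by
    rw [add_comm (b*a)]
  unfold Taux
  linear_combination hsum - (1/2 : ℂ) * e1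

lemma aux_T0 (hlin_rho : ∀ M : Mat n, IsLinearMap ℂ fun ρ => Θ ρ M)
    (hlin_M : ∀ ρ : Mat n, IsLinearMap ℂ fun M => Θ ρ M)
    (hcomm : ∀ ρ M : Mat n, ρ * M = M * ρ → Θ ρ M = ρ * M)
    (hT : ∀ ρ M : Mat n, (hsAdj (Θ ρ) Mᴴ)ᴴ = Θ ρ M)
    (a b c : Mat n) : Taux n Θ a b c = 0 := by
  have asym := aux_asym12 n Θ hlin_rho hlin_M hcomm
  have sym := aux_sym23 n Θ hT
  have chain : Taux n Θ a b c = - Taux n Θ a b c := by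
    calc Taux n Θ a b c = - Taux n Θ b a c := asym a b c
    _ = - Taux n Θ b c a := by rw [sym b a c]
    _ = Taux n Θ c b a := by rw [asym b c a, neg_neg]
    _ = Taux n Θ c a b := sym c b a
    _ = - Taux n Θ a c b := by rw [asym a c b, neg_neg]
    _ = - Taux n Θ a b c := by rw [sym a b c]
  linear_combination chain / 2

end mainAux

/-- A bilinear state-rendering function `Θ` that reduces to `ρM` on
commuting pairs and satisfies the time-reversal symmetry `Θ_ρ‡ = Θ_ρ`
(where `Θ_ρ‡(M) := (Θ_ρ†(Mᴴ))ᴴ`, `Θ_ρ†` the Hilbert–Schmidt adjoint) must be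
the symmetric Jordan product `Θ_ρ(M) = ½(ρM + Mρ)`. -/
theorem stmt_0 (n : ℕ) (hn : 1 ≤ n) (Θ : Mat n → Mat n → Mat n)
    (hlin_rho : ∀ M : Mat n, IsLinearMap ℂ fun ρ => Θ ρ M)
    (hlin_M : ∀ ρ : Mat n, IsLinearMap ℂ fun M => Θ ρ M)
    (hcomm : ∀ ρ M : Mat n, ρ * M = M * ρ → Θ ρ M = ρ * M)
    (hT : ∀ ρ M : Mat n, (hsAdj (Θ ρ) Mᴴ)ᴴ = Θ ρ M) :
    ∀ ρ M : Mat n, Θ ρ M = (1 / 2 : ℂ) • (ρ * M + M * ρ) := by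
  intro ρ M
  ext i j
  have h0 := aux_T0 n Θ hlin_rho hlin_M hcomm hT ρ M (Matrix.single j i (1:ℂ))
  unfold Taux at h0
  rw [aux_trace_stdBasisMatrix_mul, aux_trace_stdBasisMatrix_mul] at h0
  simp only [Matrix.smul_apply, Matrix.add_apply, smul_eq_mul]
  rw [Matrix.add_apply] at h0
  linear_combination h0
end

section
/- Let n, m ≥ 1 and let Θ : M_n × M_n → M_n be bilinear such that (i) Θ_ρ(M) = ρM whenever ρM = Mρ, and (ii) Θ_ρ‡ = Θ_ρ for every ρ, where Θ_ρ‡(M) = (Θ_ρ†(M†))† with Θ_ρ† the Hilbert–Schmidt adjoint of M ↦ Θ_ρ(M). Then for every linear map E : M_n → M_m and every ρ ∈ M_n one has (id ⊗ E)((Θ_ρ ⊗ id)(F)) = ½{ρ⊗1, D[E]}; that is, the state over time function induced by Θ is the Fullwood–Parzygnat function. -/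
open Matrix Kronecker BigOperators ComplexOrder

lemma trace_mul_std {n : ℕ} (M : Mat n) (i j : Fin n) :
    Matrix.trace (M * Matrix.single j i (1:ℂ)) = M i j := by
  simp [Matrix.trace, Matrix.mul_apply, Matrix.single, Matrix.diag,
    Finset.sum_ite_eq, ite_and]

lemma hsadj_entry {n : ℕ} (L : Mat n → Mat n)
    (hL : ∀ M, (hsAdj L Mᴴ)ᴴ = L M) (M : Mat n) (i j : Fin n) :
    L M i j = Matrix.trace (M * L (Matrix.single j i 1)) := by
  conv_lhs => rw [← hL M]
  rw [Matrix.conjTranspose_apply]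
  show star ((Matrix.of fun i j => Matrix.trace ((L (Matrix.single i j (1:ℂ)))ᴴ * Mᴴ)) j i) = _
  rw [Matrix.of_apply, ← Matrix.conjTranspose_mul, Matrix.trace_conjTranspose]
  simp

lemma dagger_trace {n : ℕ} (L : Mat n → Mat n) (hlin : IsLinearMap ℂ L)
    (hL : ∀ M, (hsAdj L Mᴴ)ᴴ = L M) (X Y : Mat n) :
    Matrix.trace (L X * Y) = Matrix.trace (X * L Y) := by
  have entry := hsadj_entry L hL
  have hY : L Y = ∑ a : Fin n, ∑ b : Fin n, Y a b • L (Matrix.single a b 1) := by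
    conv_lhs => rw [Matrix.matrix_eq_sum_single Y]
    rw [show L = (IsLinearMap.mk' L hlin : Mat n →ₗ[ℂ] Mat n) from rfl, map_sum]
    refine Finset.sum_congr rfl fun a _ => ?_
    rw [map_sum]
    refine Finset.sum_congr rfl fun b _ => ?_
    have : Matrix.single a b (Y a b) = Y a b • Matrix.single a b (1:ℂ) := by
      simp
    rw [this, _root_.map_smul]
  calc Matrix.trace (L X * Y) = ∑ i, ∑ j, L X i j * Y j i := by
        simp [Matrix.trace, Matrix.mul_apply, Matrix.diag]
    _ = ∑ i, ∑ j, Matrix.trace (X * L (Matrix.single j i 1)) * Y j i := by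
        simp_rw [entry]
    _ = Matrix.trace (X * L Y) := by
        rw [hY]
        simp_rw [Matrix.mul_sum, Matrix.trace_sum, Matrix.mul_smul, Matrix.trace_smul,
          smul_eq_mul]
        rw [Finset.sum_comm]
        exact Finset.sum_congr rfl fun a _ => Finset.sum_congr rfl fun b _ => mul_comm _ _

lemma jordan_key {n : ℕ} (Θ : Mat n → Mat n → Mat n)
    (hlin_rho : ∀ M : Mat n, IsLinearMap ℂ fun ρ => Θ ρ M)
    (hlin_M : ∀ ρ : Mat n, IsLinearMap ℂ fun M => Θ ρ M)
    (hcomm : ∀ ρ M : Mat n, ρ * M = M * ρ → Θ ρ M = ρ * M)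
    (hT : ∀ ρ M : Mat n, (hsAdj (Θ ρ) Mᴴ)ᴴ = Θ ρ M)
    (ρ M : Mat n) : Θ ρ M = (1/2 : ℂ) • (ρ * M + M * ρ) := by
  set Φ : Mat n → Mat n → Mat n :=
    fun σ N => Θ σ N - (1/2:ℂ) • (σ*N + N*σ) with hΦ
  have hΦcomm : ∀ σ N : Mat n, σ * N = N * σ → Φ σ N = 0 := by
    intro σ N h
    simp only [hΦ, hcomm σ N h, h, sub_eq_zero]
    rw [← h]
    rw [← two_smul ℂ (σ * N), smul_smul]
    norm_num
  have hΦanti : ∀ σ τ : Mat n, Φ σ τ = - Φ τ σ := by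
    intro σ τ
    have hexp : Θ (σ + τ) (σ + τ)
        = Θ σ σ + Θ σ τ + Θ τ σ + Θ τ τ := by
      rw [(hlin_rho (σ + τ)).map_add, (hlin_M σ).map_add, (hlin_M τ).map_add]
      abel
    have h0 : Θ (σ + τ) (σ + τ) = (σ + τ) * (σ + τ) := hcomm _ _ rfl
    have h1 : Θ σ σ = σ * σ := hcomm _ _ rfl
    have h2 : Θ τ τ = τ * τ := hcomm _ _ rfl
    have hsum : Θ σ τ + Θ τ σ = σ * τ + τ * σ := by
      have := hexp.symm.trans h0
      rw [h1, h2] at this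
      have h3 : σ * σ + Θ σ τ + Θ τ σ + τ * τ
          = σ * σ + σ * τ + (τ * σ + τ * τ) := by
        rw [this]; noncomm_ring
      -- cancel
      have := h3
      abel_nf at this ⊢
      linear_combination (norm := abel_nf) this
    have : Φ σ τ + Φ τ σ = 0 := by
      simp only [hΦ]
      rw [show Θ σ τ - (1/2:ℂ) • (σ*τ + τ*σ) + (Θ τ σ - (1/2:ℂ) • (τ*σ + σ*τ))
          = (Θ σ τ + Θ τ σ) - ((1/2:ℂ) • (σ*τ + τ*σ) + (1/2:ℂ) • (τ*σ + σ*τ)) by abel]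
      rw [hsum, ← smul_add]
      rw [show (σ*τ + τ*σ) + (τ*σ + σ*τ) = (2:ℂ) • (σ*τ + τ*σ) by
        rw [two_smul]; abel]
      rw [smul_smul]
      norm_num
    exact eq_neg_of_add_eq_zero_left this
  have hΦtr : ∀ (σ X Y : Mat n),
      Matrix.trace (Φ σ X * Y) = Matrix.trace (X * Φ σ Y) := by
    intro σ X Y
    have hth := dagger_trace (Θ σ) (hlin_M σ) (hT σ) X Y
    simp only [hΦ, Matrix.sub_mul, Matrix.mul_sub, Matrix.trace_sub,
      Matrix.smul_mul, Matrix.mul_smul, Matrix.trace_smul, Matrix.add_mul,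
      Matrix.mul_add, Matrix.trace_add, hth]
    congr 1
    rw [smul_eq_mul, smul_eq_mul]
    congr 1
    have hc : (σ * X * Y).trace = (X * (Y * σ)).trace := by
      rw [Matrix.trace_mul_cycle σ X Y, Matrix.trace_mul_cycle Y σ X, mul_assoc]
    rw [hc, add_comm, mul_assoc X σ Y]
  have hT0 : ∀ (a b c : Mat n), Matrix.trace (Φ a b * c) = 0 := by
    have h1 : ∀ x y z : Mat n,
        Matrix.trace (Φ x y * z) = Matrix.trace (Φ x z * y) := by
      intro x y z
      rw [hΦtr, Matrix.trace_mul_comm]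
    have h2 : ∀ x y z : Mat n,
        Matrix.trace (Φ x y * z) = - Matrix.trace (Φ y x * z) := by
      intro x y z
      rw [hΦanti x y]
      simp
    intro a b c
    have : Matrix.trace (Φ a b * c) = - Matrix.trace (Φ a b * c) := by
      calc Matrix.trace (Φ a b * c) = Matrix.trace (Φ a c * b) := h1 a b c
        _ = - Matrix.trace (Φ c a * b) := h2 a c b
        _ = - Matrix.trace (Φ c b * a) := by rw [h1 c a b]
        _ = Matrix.trace (Φ b c * a) := by rw [h2 c b a]; ring
        _ = Matrix.trace (Φ b a * c) := h1 b c a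
        _ = - Matrix.trace (Φ a b * c) := h2 b a c
    have h2x : Matrix.trace (Φ a b * c) + Matrix.trace (Φ a b * c) = 0 := by
      linear_combination this
    exact add_self_eq_zero.mp h2x
  have hΦ0 : Φ ρ M = 0 := by
    ext i j
    have := hT0 ρ M (Matrix.single j i 1)
    rw [trace_mul_std] at this
    simpa using this
  have := hΦ0
  simp only [hΦ, sub_eq_zero] at this
  exact this

lemma swap_inner {n : ℕ} (x y : Fin n) :
    (Matrix.of fun u v : Fin n => swapOp n (u,x) (v,y)) = Matrix.single y x (1:ℂ) := by
  ext u v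
  simp only [swapOp, Matrix.of_apply, Matrix.single]
  congr 1
  simp only [eq_iff_iff]
  constructor
  · rintro ⟨h1, h2⟩; exact ⟨h1.symm, h2⟩
  · rintro ⟨h1, h2⟩; exact ⟨h1.symm, h2⟩

lemma swap_inner2 {n : ℕ} (e g : Fin n) :
    (Matrix.of fun u v : Fin n => swapOp n (e,u) (g,v)) = Matrix.single g e (1:ℂ) := by
  ext u v
  simp only [swapOp, Matrix.of_apply, Matrix.single]
  congr 1
  simp only [eq_iff_iff]
  constructor
  · rintro ⟨h1, h2⟩; exact ⟨h2.symm, h1⟩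
  · rintro ⟨h1, h2⟩; exact ⟨h2, h1.symm⟩

lemma chan_entry {n m : ℕ} (E : Mat n → Mat m) (e g : Fin n) (f h : Fin m) :
    chanState E (e,f) (g,h) = E (Matrix.single g e 1) f h := by
  show E (Matrix.of fun x y => swapOp n (e,x) (g,y)) f h = _
  rw [swap_inner2]

/-- under the hypotheses of Statement 0, the state over time function
induced by `Θ`, namely `(id ⊗ E)((Θ_ρ ⊗ id)(F))`, is the Fullwood–Parzygnat
function `½{ρ ⊗ 1, D[E]}`. -/
theorem stmt_1 (n m : ℕ) (hn : 1 ≤ n) (hm : 1 ≤ m) (Θ : Mat n → Mat n → Mat n)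
    (hlin_rho : ∀ M : Mat n, IsLinearMap ℂ fun ρ => Θ ρ M)
    (hlin_M : ∀ ρ : Mat n, IsLinearMap ℂ fun M => Θ ρ M)
    (hcomm : ∀ ρ M : Mat n, ρ * M = M * ρ → Θ ρ M = ρ * M)
    (hT : ∀ ρ M : Mat n, (hsAdj (Θ ρ) Mᴴ)ᴴ = Θ ρ M)
    (E : Mat n → Mat m) (hE : IsLinearMap ℂ E) (ρ : Mat n) :
    idT E (tId (Θ ρ) (swapOp n)) = FP E ρ := by
  have key := jordan_key Θ hlin_rho hlin_M hcomm hT ρ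
  ext ⟨a, b⟩ ⟨c, d⟩
  have inner : (Matrix.of fun x y => tId (Θ ρ) (swapOp n) (a,x) (c,y))
      = (∑ e : Fin n, ((1/2:ℂ) * ρ a e) • Matrix.single c e (1:ℂ))
        + ∑ e : Fin n, ((1/2:ℂ) * ρ e c) • Matrix.single e a (1:ℂ) := by
    ext x y
    show tId (Θ ρ) (swapOp n) (a,x) (c,y) = _
    have : tId (Θ ρ) (swapOp n) (a,x) (c,y)
        = Θ ρ (Matrix.of fun u v => swapOp n (u,x) (v,y)) a c := rfl
    rw [this, swap_inner, key]
    simp only [Matrix.add_apply, Matrix.sum_apply, Matrix.smul_apply,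
      Matrix.mul_apply, Matrix.single, Matrix.of_apply, smul_eq_mul,
      mul_ite, mul_one, mul_zero, ite_mul, zero_mul, one_mul, ite_and]
    rcases eq_or_ne x c with rfl | h1 <;> rcases eq_or_ne y a with rfl | h2
    · simp [Finset.sum_ite_eq, Finset.sum_ite_eq']
      try ring
    · simp [h2, Ne.symm h2, Finset.sum_ite_eq, Finset.sum_ite_eq']
      try ring
    · simp [h1, Ne.symm h1, Finset.sum_ite_eq, Finset.sum_ite_eq']
      try ring
    · simp [h1, h2, Ne.symm h1, Ne.symm h2, Finset.sum_ite_eq, Finset.sum_ite_eq']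
      try ring
  have lhs_eq : idT E (tId (Θ ρ) (swapOp n)) (a,b) (c,d)
      = (∑ e : Fin n, ((1/2:ℂ) * ρ a e) * E (Matrix.single c e 1) b d)
        + ∑ e : Fin n, ((1/2:ℂ) * ρ e c) * E (Matrix.single e a 1) b d := by
    show E (Matrix.of fun x y => tId (Θ ρ) (swapOp n) (a,x) (c,y)) b d = _
    rw [inner]
    set E' : Mat n →ₗ[ℂ] Mat m := IsLinearMap.mk' E hE with hE'
    have hEE : ∀ X : Mat n, E X = E' X := fun _ => rfl
    rw [hEE, map_add, map_sum, map_sum]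
    simp only [_root_.map_smul]
    simp only [Matrix.add_apply, Matrix.sum_apply, Matrix.smul_apply, smul_eq_mul]
    rfl
  rw [lhs_eq]
  show _ = ((1/2 : ℂ) • ((ρ ⊗ₖ (1 : Mat m)) * chanState E + chanState E * (ρ ⊗ₖ (1 : Mat m)))) (a,b) (c,d)
  have hmul1 : ((ρ ⊗ₖ (1 : Mat m)) * chanState E) (a,b) (c,d)
      = ∑ e : Fin n, ρ a e * E (Matrix.single c e 1) b d := by
    rw [Matrix.mul_apply]
    rw [Fintype.sum_prod_type]
    refine Finset.sum_congr rfl fun e _ => ?_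
    rw [Finset.sum_eq_single b]
    · rw [chan_entry, Matrix.kroneckerMap_apply, Matrix.one_apply_eq, mul_one]
    · intro f _ hf
      rw [Matrix.kroneckerMap_apply, Matrix.one_apply_ne (Ne.symm hf)]
      ring
    · intro hb; exact absurd (Finset.mem_univ b) hb
  have hmul2 : (chanState E * (ρ ⊗ₖ (1 : Mat m))) (a,b) (c,d)
      = ∑ e : Fin n, E (Matrix.single e a 1) b d * ρ e c := by
    rw [Matrix.mul_apply]
    rw [Fintype.sum_prod_type]
    refine Finset.sum_congr rfl fun e _ => ?_
    rw [Finset.sum_eq_single d]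
    · rw [chan_entry, Matrix.kroneckerMap_apply, Matrix.one_apply_eq, mul_one]
    · intro f _ hf
      rw [Matrix.kroneckerMap_apply, Matrix.one_apply_ne hf]
      ring
    · intro hb; exact absurd (Finset.mem_univ d) hb
  rw [Matrix.smul_apply, Matrix.add_apply, hmul1, hmul2, smul_eq_mul,
    mul_add, Finset.mul_sum, Finset.mul_sum]
  congr 1 <;> exact Finset.sum_congr rfl fun e _ => by ring
end

section
/- Let n ≥ 1 and let L : M_n → M_n be a linear map. Then F·((L ⊗ id)(F))·F = (L ⊗ id)(F) (time-reversal symmetry of the associated two-point operator) if and only if L‡ = L, where L‡(M) := (L†(M†))† and L† is the Hilbert–Schmidt adjoint of L. -/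
open Matrix Kronecker BigOperators ComplexOrder

lemma swap_mul {n : ℕ} (M : Matrix (Fin n × Fin n) (Fin n × Fin n) ℂ) (p q : Fin n × Fin n) :
    (swapOp n * M) p q = M (p.2, p.1) q := by
  rw [Matrix.mul_apply, Finset.sum_eq_single ((p.2, p.1) : Fin n × Fin n)]
  · simp [swapOp]
  · intro b _ hb
    have : ¬(p.1 = b.2 ∧ p.2 = b.1) := by
      rintro ⟨h1, h2⟩; exact hb (Prod.ext h2.symm h1.symm)
    simp [swapOp, this]
  · simp

lemma mul_swap {n : ℕ} (M : Matrix (Fin n × Fin n) (Fin n × Fin n) ℂ) (p q : Fin n × Fin n) :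
    (M * swapOp n) p q = M p (q.2, q.1) := by
  rw [Matrix.mul_apply, Finset.sum_eq_single ((q.2, q.1) : Fin n × Fin n)]
  · simp [swapOp]
  · intro b _ hb
    have : ¬(b.1 = q.2 ∧ b.2 = q.1) := by
      rintro ⟨h1, h2⟩; exact hb (Prod.ext h1 h2)
    simp [swapOp, this]
  · simp

lemma tId_swap {n : ℕ} (L : Mat n → Mat n) (p q : Fin n × Fin n) :
    tId L (swapOp n) p q = L (Matrix.single q.2 p.2 (1 : ℂ)) p.1 q.1 := by
  simp only [tId, Matrix.of_apply]
  congr 2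
  ext x y
  simp only [swapOp, Matrix.of_apply, Matrix.single, Matrix.of_apply]
  by_cases h : q.2 = x
  · simp [h]
  · simp [h, show x ≠ q.2 from fun hx => h hx.symm]

lemma hs_entry {n : ℕ} (L : Mat n → Mat n) (M : Mat n) (i j : Fin n) :
    (hsAdj L Mᴴ)ᴴ i j = ∑ x, ∑ y, L (Matrix.single j i (1 : ℂ)) y x * M x y := by
  simp only [Matrix.conjTranspose_apply, hsAdj, Matrix.of_apply, Matrix.trace,
    Matrix.diag_apply, Matrix.mul_apply, star_sum, star_mul', star_star, Matrix.conjTranspose_apply]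

/-- for a linear map `L : M_n → M_n`, the two-point operator
`(L ⊗ id)(F)` is invariant under conjugation by the swap `F` if and only if
`L‡ = L`, where `L‡(M) := (L†(Mᴴ))ᴴ` with `L†` the Hilbert–Schmidt adjoint. -/
theorem stmt_2 (n : ℕ) (hn : 1 ≤ n) (L : Mat n → Mat n) (hL : IsLinearMap ℂ L) :
    swapOp n * tId L (swapOp n) * swapOp n = tId L (swapOp n) ↔
      ∀ M : Mat n, (hsAdj L Mᴴ)ᴴ = L M := by
  constructor
  · intro h M
    have hC : ∀ i j k l : Fin n,
        L (Matrix.single k i 1) j l = L (Matrix.single l j 1) i k := by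
      intro i j k l
      have h2 := congrFun (congrFun h (i, j)) (k, l)
      rw [mul_swap, swap_mul, tId_swap, tId_swap] at h2
      exact h2
    ext i j
    rw [hs_entry]
    have hM : M = ∑ x, ∑ y, (M x y) • Matrix.single x y (1 : ℂ) := by
      conv_lhs => rw [Matrix.matrix_eq_sum_single M]
      refine Finset.sum_congr rfl fun x _ => Finset.sum_congr rfl fun y _ => ?_
      rw [Matrix.smul_single, smul_eq_mul, mul_one]
    have expand : L M = ∑ x, ∑ y, (M x y) • L (Matrix.single x y (1 : ℂ)) := by
      conv_lhs => rw [hM, show L = ⇑(IsLinearMap.mk' L hL) from rfl]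
      rw [map_sum]
      exact Finset.sum_congr rfl fun x _ => by
        rw [map_sum]; exact Finset.sum_congr rfl fun y _ => by
          rw [_root_.map_smul]; rfl
    rw [expand]
    simp only [Matrix.sum_apply, Matrix.smul_apply, smul_eq_mul]
    refine Finset.sum_congr rfl fun x _ => Finset.sum_congr rfl fun y _ => ?_
    rw [hC i y j x]; ring
  · intro h
    have hD : ∀ i j k l : Fin n,
        L (Matrix.single j i 1) l k = L (Matrix.single k l 1) i j := by
      intro i j k l
      have h2 := congrFun (congrFun (h (Matrix.single k l 1)) i) j
      rw [hs_entry] at h2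
      simpa [Matrix.single, Finset.sum_ite_eq, ite_and] using h2
    ext p q
    rw [mul_swap, swap_mul, tId_swap, tId_swap]
    exact hD p.1 q.1 q.2 p.2
end

section
/- Let n ≥ 1 and let Θ : M_n × M_n → M_n be bilinear over ℂ such that (i) Θ_ρ(M) = ρM whenever ρM = Mρ; (ii) for every positive semidefinite ρ with Tr ρ = 1 the map M ↦ Θ_ρ(M) is self-adjoint with respect to the Hilbert–Schmidt inner product; (iii) for every positive semidefinite ρ with Tr ρ = 1 and every M ∈ M_n, Tr(M†Θ_ρ(M)) is a nonnegative real number. Then there exists μ ∈ [0,1] such that Θ_ρ(M) = μρM + (1−μ)Mρ for all ρ, M ∈ M_n; i.e. Θ is a convex combination of the left bloom (ρ,M) ↦ Mρ and the right bloom (ρ,M) ↦ ρM. -/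
open Matrix Kronecker BigOperators ComplexOrder

namespace Stmt4Aux
noncomputable def E (n : ℕ) (i j : Fin n) : Mat n := Matrix.single i j (1:ℂ)

lemma E_apply {n : ℕ} (i j k l : Fin n) : E n i j k l = if i = k ∧ j = l then 1 else 0 := rfl

@[simp] lemma E_apply_same {n : ℕ} (i j : Fin n) : E n i j i j = 1 := by simp [E_apply]

lemma E_mul {n : ℕ} (i j k l : Fin n) : E n i j * E n k l = if j = k then E n i l else 0 := by
  by_cases h : j = k
  · subst h; rw [if_pos rfl]; simp [E]
  · rw [if_neg h]; exact Matrix.single_mul_single_of_ne (1:ℂ) i j k h 1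

lemma E_conjT {n : ℕ} (i j : Fin n) : (E n i j)ᴴ = E n j i := by
  ext k l
  simp [E, Matrix.conjTranspose_apply, Matrix.single, and_comm]

lemma trace_cT_mul {n : ℕ} (A : Mat n) (p q : Fin n) :
    Matrix.trace (Aᴴ * E n p q) = (starRingEnd ℂ) (A p q) := by
  simp only [Matrix.trace, Matrix.mul_apply, E, Matrix.diag, Matrix.single,
    Matrix.conjTranspose_apply, Matrix.of_apply, mul_ite, mul_one, mul_zero]
  simp [ite_and, Finset.sum_ite_eq]

lemma trace_E_cT_mul {n : ℕ} (B : Mat n) (k l : Fin n) :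
    Matrix.trace ((E n k l)ᴴ * B) = B k l := by
  rw [E_conjT]
  simp only [Matrix.trace, Matrix.mul_apply, E, Matrix.diag, Matrix.single,
    Matrix.of_apply, ite_mul, one_mul, zero_mul]
  simp [ite_and, Finset.sum_ite_eq]

variable {n : ℕ}

def Bil (S : Mat n → Mat n → Mat n) : Prop :=
  (∀ x y, x*y = y*x → S x y = 0) ∧
  (∀ x y, S x y = - S y x) ∧
  (∀ x, IsLinearMap ℂ (S x)) ∧
  (∀ y, IsLinearMap ℂ (fun x => S x y))

def Star4 (S : Mat n → Mat n → Mat n) (ρ : Mat n) : Prop :=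
  ∀ k l p q : Fin n, (starRingEnd ℂ) (S ρ (E n k l) p q) = S ρ (E n p q) k l

def StarAll (S : Mat n → Mat n → Mat n) : Prop :=
  (∀ a, Star4 S (E n a a)) ∧
  (∀ a b, a ≠ b → Star4 S (E n a b + E n b a)) ∧
  (∀ a b, a ≠ b → Star4 S (Complex.I • E n a b - Complex.I • E n b a))

variable {S : Mat n → Mat n → Mat n}

section BilLemmas
variable (hS : Bil S)
include hS

lemma Sadd2 (x y z : Mat n) : S x (y + z) = S x y + S x z := (hS.2.2.1 x).map_add y z
lemma Ssub2 (x y z : Mat n) : S x (y - z) = S x y - S x z :=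
  (IsLinearMap.mk' _ (hS.2.2.1 x)).map_sub y z
lemma Ssmul2 (x : Mat n) (c : ℂ) (y : Mat n) : S x (c • y) = c • S x y := (hS.2.2.1 x).map_smul c y
lemma Sadd1 (x y z : Mat n) : S (x + y) z = S x z + S y z := (hS.2.2.2 z).map_add x y
lemma Ssub1 (x y z : Mat n) : S (x - y) z = S x z - S y z :=
  (IsLinearMap.mk' _ (hS.2.2.2 z)).map_sub x y
lemma Ssmul1 (c : ℂ) (x y : Mat n) : S (c • x) y = c • S x y := (hS.2.2.2 y).map_smul c x

lemma Sself (x : Mat n) : S x x = 0 := hS.1 x x rfl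

lemma Z1 {a b c d : Fin n} (hbc : b ≠ c) (hda : d ≠ a) : S (E n a b) (E n c d) = 0 := by
  refine hS.1 _ _ ?_
  rw [E_mul, E_mul, if_neg hbc, if_neg hda]

lemma Zdiag (a b : Fin n) : S (E n a a) (E n b b) = 0 := by
  refine hS.1 _ _ ?_
  rw [E_mul, E_mul]
  by_cases h : a = b
  · subst h; rfl
  · rw [if_neg h, if_neg (Ne.symm h)]

lemma LemB {a y : Fin n} (hya : y ≠ a) :
    S (E n a y) (E n a a) + S (E n a y) (E n y y) = 0 := by
  have hc : E n a y * (E n a a + E n y y) = (E n a a + E n y y) * E n a y := by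
    simp [mul_add, add_mul, E_mul, hya, Ne.symm hya]
  have h0 := hS.1 _ _ hc
  rw [Sadd2 hS] at h0
  exact h0

lemma LemC {a y : Fin n} (hya : y ≠ a) (b : Fin n) :
    S (E n a b) (E n b y) = S (E n a a) (E n a y) := by
  by_cases hba : b = a
  · subst hba; rfl
  by_cases hby : b = y
  · subst hby
    have h1 := LemB hS (show b ≠ a from hba)
    -- h1 : S (E a b) (E a a) + S (E a b) (E b b) = 0  -- with y := b
    have h2 : S (E n a b) (E n a a) = - S (E n a a) (E n a b) := by rw [hS.2.1]
    -- goal : S (E a b) (E b b) = S (E a a) (E a b)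
    have := h1
    rw [h2] at this
    linear_combination (norm := skip) this
    abel
  · -- b ∉ {a, y}
    have hc : (E n a a + E n a b) * (E n b y - E n a y) =
        (E n b y - E n a y) * (E n a a + E n a b) := by
      simp [mul_sub, sub_mul, add_mul, mul_add, E_mul, hya, hba, Ne.symm hba, Ne.symm hya]
    have h0 := hS.1 _ _ hc
    rw [Sadd1 hS, Ssub2 hS, Ssub2 hS] at h0
    have z1 : S (E n a a) (E n b y) = 0 := Z1 hS (Ne.symm hba) hya
    have z2 : S (E n a b) (E n a y) = 0 := Z1 hS hba hya
    rw [z1, z2] at h0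
    linear_combination (norm := skip) h0
    abel

lemma V2 {a k : Fin n} (hka : k ≠ a) :
    S (E n a a) (E n k a) = - S (E n k k) (E n k a) := by
  have h1 : S (E n k a) (E n a a) = S (E n k k) (E n k a) := LemC hS (Ne.symm hka) a
  rw [hS.2.1, h1]

end BilLemmas
section StarLemmas

lemma conj_eq_zero {x : ℂ} (h : (starRingEnd ℂ) x = 0) : x = 0 := by
  have := congrArg (starRingEnd ℂ) h
  simpa using this

variable (hS : Bil S) (hsE : ∀ a, Star4 S (E n a a))

include hsE in
lemma StepI {a y : Fin n} (hya : y ≠ a) {p q : Fin n} (hz : S (E n a a) (E n p q) = 0) :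
    S (E n a a) (E n a y) p q = 0 := by
  have h := hsE a a y p q
  rw [hz] at h
  exact conj_eq_zero (by simpa using h)

include hS hsE in
lemma StepI0 {a y : Fin n} (hya : y ≠ a) : S (E n a a) (E n a y) a a = 0 :=
  StepI hsE hya (Sself hS _)

include hS hsE in
lemma StepIoff {a y : Fin n} (hya : y ≠ a) {p q : Fin n} (hp : p ≠ a) (hq : q ≠ a) :
    S (E n a a) (E n a y) p q = 0 :=
  StepI hsE hya (Z1 hS (Ne.symm hp) hq)

include hS hsE in
lemma StepII {a y : Fin n} (hya : y ≠ a) {p : Fin n} (hp : p ≠ a) (hpy : p ≠ y) :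
    S (E n a a) (E n a y) p a = 0 := by
  have h := hsE a a y p a
  have hval : S (E n a a) (E n p a) = - S (E n p p) (E n p a) := V2 hS hp
  have hz : S (E n p p) (E n p a) a y = 0 :=
    StepIoff hS hsE (show (a:Fin n) ≠ p from Ne.symm hp) (Ne.symm hp) (Ne.symm hpy)
  apply conj_eq_zero
  rw [h, hval]
  simp [hz]

include hsE in
lemma StepIII {a y : Fin n} :
    (starRingEnd ℂ) (S (E n a a) (E n a y) a y) = S (E n a a) (E n a y) a y :=
  hsE a a y a y

end StarLemmas

section Tables
variable (hS : Bil S)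
include hS

lemma T1 {a b : Fin n} :
    S (E n a b + E n b a) (E n a b) = - S (E n a b) (E n b a) := by
  rw [Sadd1 hS, Sself hS, hS.2.1 (E n b a) (E n a b), zero_add]

lemma T2 {a b : Fin n} :
    S (E n a b + E n b a) (E n b a) = S (E n a b) (E n b a) := by
  rw [Sadd1 hS, Sself hS, add_zero]

lemma T3 {a b : Fin n} (hab : a ≠ b) :
    S (E n a b + E n b a) (E n a a) = - S (E n a a) (E n a b) + S (E n b b) (E n b a) := by
  rw [Sadd1 hS, hS.2.1 (E n a b) (E n a a), LemC hS hab a]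

lemma T4 {a b : Fin n} (hab : a ≠ b) :
    S (E n a b + E n b a) (E n b b) = S (E n a a) (E n a b) - S (E n b b) (E n b a) := by
  rw [Sadd1 hS, hS.2.1 (E n b a) (E n b b), LemC hS (Ne.symm hab) b, sub_eq_add_neg]

lemma T5 {a b y : Fin n} (hab : a ≠ b) (hya : y ≠ a) (hyb : y ≠ b) :
    S (E n a b + E n b a) (E n a y) = S (E n b b) (E n b y) := by
  rw [Sadd1 hS, Z1 hS (Ne.symm hab) hya, LemC hS hyb a, zero_add]

lemma T6 {a b y : Fin n} (hab : a ≠ b) (hya : y ≠ a) (hyb : y ≠ b) :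
    S (E n a b + E n b a) (E n b y) = S (E n a a) (E n a y) := by
  rw [Sadd1 hS, Z1 hS hab hyb, LemC hS hya b, add_zero]

lemma T7 {a b y : Fin n} (hab : a ≠ b) (hya : y ≠ a) (hyb : y ≠ b) :
    S (E n a b + E n b a) (E n y a) = - S (E n y y) (E n y b) := by
  rw [Sadd1 hS, hS.2.1 (E n a b) (E n y a), hS.2.1 (E n b a) (E n y a),
    LemC hS (Ne.symm hyb) a, Z1 hS hab (Ne.symm hya)]
  simp

lemma T8 {a b y : Fin n} (hab : a ≠ b) (hya : y ≠ a) (hyb : y ≠ b) :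
    S (E n a b + E n b a) (E n y b) = - S (E n y y) (E n y a) := by
  rw [Sadd1 hS, Z1 hS (Ne.symm hyb) (Ne.symm hab), hS.2.1 (E n b a) (E n y b),
    LemC hS (Ne.symm hya) b]
  simp

lemma T9 {a b y z : Fin n} (hya : y ≠ a) (hyb : y ≠ b) (hza : z ≠ a) (hzb : z ≠ b) :
    S (E n a b + E n b a) (E n y z) = 0 := by
  rw [Sadd1 hS, Z1 hS (Ne.symm hyb) hza, Z1 hS (Ne.symm hya) hzb, add_zero]

lemma RT1 {a b : Fin n} :
    S (Complex.I • E n a b - Complex.I • E n b a) (E n a b)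
      = Complex.I • S (E n a b) (E n b a) := by
  rw [Ssub1 hS, Ssmul1 hS, Ssmul1 hS, Sself hS, hS.2.1 (E n b a) (E n a b)]
  simp

lemma RT2 {a b : Fin n} :
    S (Complex.I • E n a b - Complex.I • E n b a) (E n b a)
      = Complex.I • S (E n a b) (E n b a) := by
  rw [Ssub1 hS, Ssmul1 hS, Ssmul1 hS, Sself hS]
  simp

lemma RT3 {a b : Fin n} (hab : a ≠ b) :
    S (Complex.I • E n a b - Complex.I • E n b a) (E n a a)
      = -(Complex.I • (S (E n a a) (E n a b) + S (E n b b) (E n b a))) := by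
  rw [Ssub1 hS, Ssmul1 hS, Ssmul1 hS, hS.2.1 (E n a b) (E n a a), LemC hS hab a]
  rw [smul_add]
  simp only [smul_neg]
  abel

end Tables

section DLemmas
variable (hS : Bil S) (hsE : ∀ a, Star4 S (E n a a))
  (hsH : ∀ a b : Fin n, a ≠ b → Star4 S (E n a b + E n b a))
  (hsR : ∀ a b : Fin n, a ≠ b → Star4 S (Complex.I • E n a b - Complex.I • E n b a))

include hS hsH hsR in
lemma D2 {a b : Fin n} (hab : a ≠ b) : S (E n a b) (E n b a) a b = 0 := by
  have h1 := hsH a b hab a b a b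
  rw [T1 hS] at h1
  simp only [Matrix.neg_apply, map_neg, neg_inj] at h1
  have h2 := hsR a b hab a b a b
  rw [RT1 hS] at h2
  simp only [Matrix.smul_apply, smul_eq_mul, _root_.map_mul, Complex.conj_I, h1] at h2
  have h3 : Complex.I * (S (E n a b) (E n b a) a b + S (E n a b) (E n b a) a b) = 0 := by
    linear_combination -h2
  rcases mul_eq_zero.mp h3 with h4 | h4
  · exact absurd h4 Complex.I_ne_zero
  · exact add_self_eq_zero.mp h4

include hS hsH hsR in
lemma D3 {a b : Fin n} (hab : a ≠ b) : S (E n a b) (E n b a) b a = 0 := by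
  have h1 := hsH a b hab b a b a
  rw [T2 hS] at h1
  have h2 := hsR a b hab b a b a
  rw [RT2 hS] at h2
  simp only [Matrix.smul_apply, smul_eq_mul, _root_.map_mul, Complex.conj_I, h1] at h2
  have h3 : Complex.I * (S (E n a b) (E n b a) b a + S (E n a b) (E n b a) b a) = 0 := by
    linear_combination -h2
  rcases mul_eq_zero.mp h3 with h4 | h4
  · exact absurd h4 Complex.I_ne_zero
  · exact add_self_eq_zero.mp h4

include hS hsE hsH in
lemma D4i {a b y : Fin n} (hab : a ≠ b) (hya : y ≠ a) (hyb : y ≠ b) :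
    S (E n a b) (E n b a) a y = 0 := by
  have h := hsH a b hab a b a y
  rw [T1 hS, T5 hS hab hya hyb] at h
  have hz : S (E n b b) (E n b y) a b = 0 := StepII hS hsE hyb hab (Ne.symm hya)
  rw [hz] at h
  simp only [Matrix.neg_apply, map_neg, neg_eq_zero] at h
  exact conj_eq_zero h

include hS hsE hsH in
lemma D4 {a y l : Fin n} (hya : y ≠ a) (hla : l ≠ a) (hly : l ≠ y) :
    S (E n a a) (E n a y) a l = 0 := by
  have step1 : S (E n l a) (E n a l) l y = 0 := D4i hS hsE hsH hla (Ne.symm hly) hya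
  have h := hsH l a hla a l l y
  rw [T2 hS, T5 hS hla (Ne.symm hly) hya, step1] at h
  simpa using h.symm

include hS hsE hsH in
lemma D5ya {a b y : Fin n} (hab : a ≠ b) (hya : y ≠ a) (hyb : y ≠ b) :
    S (E n a b) (E n b a) y a = 0 := by
  have h := hsH a b hab a b y a
  rw [T1 hS, T7 hS hab hya hyb] at h
  have hz : S (E n y y) (E n y b) a b = 0 := StepIoff hS hsE (Ne.symm hyb) (Ne.symm hya) (Ne.symm hyb)
  simp only [Matrix.neg_apply, map_neg, hz, neg_zero, neg_eq_zero] at h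
  exact conj_eq_zero h

include hS hsE hsH in
lemma D5yb {a b y : Fin n} (hab : a ≠ b) (hya : y ≠ a) (hyb : y ≠ b) :
    S (E n a b) (E n b a) y b = 0 := by
  have h := hsH a b hab a b y b
  rw [T1 hS, T8 hS hab hya hyb] at h
  have hz : S (E n y y) (E n y a) a b = 0 := StepIoff hS hsE (Ne.symm hya) (Ne.symm hya) (Ne.symm hyb)
  simp only [Matrix.neg_apply, map_neg, hz, neg_zero, neg_eq_zero] at h
  exact conj_eq_zero h

include hS hsE hsH in
lemma D5by {a b y : Fin n} (hab : a ≠ b) (hya : y ≠ a) (hyb : y ≠ b) :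
    S (E n a b) (E n b a) b y = 0 := by
  have h := hsH a b hab a b b y
  rw [T1 hS, T6 hS hab hya hyb] at h
  have hz : S (E n a a) (E n a y) a b = 0 := D4 hS hsE hsH hya (Ne.symm hab) (Ne.symm hyb)
  rw [hz] at h
  simp only [Matrix.neg_apply, map_neg, neg_eq_zero] at h
  exact conj_eq_zero h

include hS hsH in
lemma D5yz {a b y z : Fin n} (hab : a ≠ b) (hya : y ≠ a) (hyb : y ≠ b)
    (hza : z ≠ a) (hzb : z ≠ b) :
    S (E n a b) (E n b a) y z = 0 := by
  have h := hsH a b hab a b y z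
  rw [T1 hS, T9 hS hya hyb hza hzb] at h
  simp only [Matrix.neg_apply, map_neg, Matrix.zero_apply, neg_eq_zero] at h
  exact conj_eq_zero h

include hS hsH in
lemma E1a {a b : Fin n} (hab : a ≠ b) :
    (starRingEnd ℂ) (S (E n a b) (E n b a) a a)
      = S (E n a a) (E n a b) a b - S (E n b b) (E n b a) a b := by
  have h := hsH a b hab a b a a
  rw [T1 hS, T3 hS hab] at h
  simp only [Matrix.neg_apply, Matrix.add_apply, map_neg] at h
  linear_combination -h

include hS hsH in
lemma E1b {a b : Fin n} (hab : a ≠ b) :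
    S (E n a b) (E n b a) b b = - S (E n a b) (E n b a) a a := by
  have h := hsH a b hab a b b b
  rw [T1 hS, T4 hS hab] at h
  simp only [Matrix.neg_apply, Matrix.sub_apply, map_neg] at h
  have h2 := E1a hS hsH hab
  have h3 : (starRingEnd ℂ) (S (E n a b) (E n b a) b b)
      = - (starRingEnd ℂ) (S (E n a b) (E n b a) a a) := by
    rw [h2]
    linear_combination -h
  have := congrArg (starRingEnd ℂ) h3
  simpa using this

include hS hsE hsR in
lemma E2 {a b : Fin n} (hab : a ≠ b) :
    S (E n a a) (E n a b) a b + (starRingEnd ℂ) (S (E n b b) (E n b a) a b)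
      = S (E n a b) (E n b a) a a := by
  have h := hsR a b hab a a a b
  rw [RT3 hS hab, RT1 hS] at h
  have hreal : (starRingEnd ℂ) (S (E n a a) (E n a b) a b) = S (E n a a) (E n a b) a b :=
    StepIII hsE
  simp only [Matrix.neg_apply, Matrix.smul_apply, Matrix.add_apply, smul_eq_mul,
    map_neg, _root_.map_mul, _root_.map_add, Complex.conj_I, hreal] at h
  have hI : (Complex.I : ℂ) ≠ 0 := Complex.I_ne_zero
  apply mul_left_cancel₀ hI
  linear_combination h

include hS hsE hsH hsR in
lemma D6s {a b : Fin n} (hab : a ≠ b) : S (E n b b) (E n b a) a b = 0 := by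
  have h1 := E1a hS hsH hab
  have h2 := E2 hS hsE hsR hab
  have hreal : (starRingEnd ℂ) (S (E n a a) (E n a b) a b) = S (E n a a) (E n a b) a b :=
    StepIII hsE
  have h1' := congrArg (starRingEnd ℂ) h1
  simp only [Complex.conj_conj, map_sub, hreal] at h1'
  -- h1' : G a a = c - conj s ; h2 : c + conj s = G a a
  have : (starRingEnd ℂ) (S (E n b b) (E n b a) a b) = 0 := by linear_combination h2/2 + h1'/2
  exact conj_eq_zero this

include hS hsE hsH hsR in
lemma D6c {a b : Fin n} (hab : a ≠ b) :
    S (E n a b) (E n b a) a a = S (E n a a) (E n a b) a b := by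
  have h2 := E2 hS hsE hsR hab
  have hs0 := D6s hS hsE hsH hsR hab
  rw [hs0] at h2
  simpa using h2.symm

include hS hsE hsH hsR in
lemma D7 {a b : Fin n} (hab : a ≠ b) :
    S (E n a a) (E n a b) a b = S (E n b b) (E n b a) b a := by
  have h1 : S (E n b a) (E n a b) = - S (E n a b) (E n b a) := hS.2.1 _ _
  have h2 : S (E n b a) (E n a b) b b = S (E n b b) (E n b a) b a :=
    D6c hS hsE hsH hsR (Ne.symm hab)
  rw [h1] at h2
  rw [← h2, Matrix.neg_apply, E1b hS hsH hab, neg_neg, D6c hS hsE hsH hsR hab]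

include hS hsE hsH in
lemma D8 {a b y : Fin n} (hab : a ≠ b) (hya : y ≠ a) (hyb : y ≠ b) :
    S (E n a a) (E n a y) a y = S (E n b b) (E n b y) b y := by
  have h := hsH a b hab a y b y
  rw [T5 hS hab hya hyb, T6 hS hab hya hyb] at h
  rw [← h, StepIII hsE]

end DLemmas

section Const
variable (hS : Bil S) (hsE : ∀ a, Star4 S (E n a a))
  (hsH : ∀ a b : Fin n, a ≠ b → Star4 S (E n a b + E n b a))
  (hsR : ∀ a b : Fin n, a ≠ b → Star4 S (Complex.I • E n a b - Complex.I • E n b a))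

include hS hsE hsH hsR in
lemma constYb0 {a0 b0 y : Fin n} (h0 : a0 ≠ b0) (hy : y ≠ b0) :
    S (E n b0 b0) (E n b0 y) b0 y = S (E n a0 a0) (E n a0 b0) a0 b0 := by
  have e1 := D7 hS hsE hsH hsR (show b0 ≠ y from Ne.symm hy)
  rw [e1]
  by_cases hya0 : y = a0
  · subst hya0; rfl
  · exact D8 hS hsE hsH hya0 (Ne.symm hy) (Ne.symm h0)

include hS hsE hsH hsR in
lemma constF {a0 b0 a y : Fin n} (h0 : a0 ≠ b0) (hya : y ≠ a) :
    S (E n a a) (E n a y) a y = S (E n a0 a0) (E n a0 b0) a0 b0 := by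
  by_cases hyb0 : y = b0
  · subst hyb0
    by_cases haa0 : a = a0
    · subst haa0; rfl
    · exact D8 hS hsE hsH haa0 hya (Ne.symm h0)
  · by_cases hab0 : a = b0
    · subst hab0; exact constYb0 hS hsE hsH hsR h0 hyb0
    · rw [D8 hS hsE hsH hab0 hya hyb0]
      exact constYb0 hS hsE hsH hsR h0 hyb0

include hS hsE hsH hsR in
lemma MA {a0 b0 a y : Fin n} (h0 : a0 ≠ b0) (hya : y ≠ a) :
    S (E n a a) (E n a y) = (S (E n a0 a0) (E n a0 b0) a0 b0) • E n a y := by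
  ext p q
  simp only [Matrix.smul_apply, smul_eq_mul]
  rw [E_apply]
  by_cases hp : p = a
  · rw [hp]
    by_cases hq : q = a
    · rw [hq, StepI0 hS hsE hya, if_neg (fun hc => hya hc.2), mul_zero]
    · by_cases hqy : q = y
      · rw [hqy, constF hS hsE hsH hsR h0 hya, if_pos ⟨rfl, rfl⟩, mul_one]
      · rw [D4 hS hsE hsH hya hq hqy, if_neg (fun hc => hqy hc.2.symm), mul_zero]
  · rw [if_neg (fun hc => hp hc.1.symm), mul_zero]
    by_cases hq : q = a
    · rw [hq]
      by_cases hpy : p = y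
      · rw [hpy, D6s hS hsE hsH hsR hya]
      · rw [StepII hS hsE hya hp hpy]
    · rw [StepIoff hS hsE hya hp hq]

include hS hsE hsH hsR in
lemma MG {a0 b0 a b : Fin n} (h0 : a0 ≠ b0) (hab : a ≠ b) :
    S (E n a b) (E n b a) = (S (E n a0 a0) (E n a0 b0) a0 b0) • (E n a a - E n b b) := by
  ext p q
  simp only [Matrix.smul_apply, Matrix.sub_apply, smul_eq_mul]
  rw [E_apply, E_apply]
  by_cases hp : p = a
  · rw [hp]
    by_cases hq : q = a
    · rw [hq, D6c hS hsE hsH hsR hab, constF hS hsE hsH hsR h0 (Ne.symm hab),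
        if_pos ⟨rfl, rfl⟩, if_neg (fun hc => hab hc.1.symm)]
      ring
    · by_cases hqb : q = b
      · rw [hqb, D2 hS hsH hsR hab, if_neg (fun hc => hab hc.2),
          if_neg (fun hc => hab hc.1.symm)]
        ring
      · rw [D4i hS hsE hsH hab hq hqb, if_neg (fun hc => hq hc.2.symm),
          if_neg (fun hc => hab hc.1.symm)]
        ring
  · by_cases hpb : p = b
    · rw [hpb]
      by_cases hq : q = a
      · rw [hq, D3 hS hsH hsR hab, if_neg (fun hc => hab hc.1), if_neg (fun hc => hab hc.2.symm)]
        ring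
      · by_cases hqb : q = b
        · rw [hqb, E1b hS hsH hab, D6c hS hsE hsH hsR hab,
            constF hS hsE hsH hsR h0 (Ne.symm hab), if_neg (fun hc => hab hc.1),
            if_pos ⟨rfl, rfl⟩]
          ring
        · rw [D5by hS hsE hsH hab hq hqb, if_neg (fun hc => hab hc.1),
            if_neg (fun hc => hqb hc.2.symm)]
          ring
    · by_cases hq : q = a
      · rw [hq, D5ya hS hsE hsH hab hp hpb, if_neg (fun hc => hp hc.1.symm),
          if_neg (fun hc => hpb hc.1.symm)]
        ring
      · by_cases hqb : q = b
        · rw [hqb, D5yb hS hsE hsH hab hp hpb, if_neg (fun hc => hp hc.1.symm),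
            if_neg (fun hc => hpb hc.1.symm)]
          ring
        · rw [D5yz hS hsH hab hp hpb hq hqb, if_neg (fun hc => hp hc.1.symm),
            if_neg (fun hc => hpb hc.1.symm)]
          ring

include hS hsE hsH hsR in
lemma SU {a0 b0 : Fin n} (h0 : a0 ≠ b0) (p q r s₁ : Fin n) :
    S (E n p q) (E n r s₁)
      = (S (E n a0 a0) (E n a0 b0) a0 b0) • (E n p q * E n r s₁ - E n r s₁ * E n p q) := by
  rw [E_mul, E_mul]
  by_cases hqr : q = r
  · rw [hqr]
    by_cases hsp : s₁ = p
    · rw [hsp, if_pos rfl, if_pos rfl]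
      by_cases hpr : p = r
      · rw [hpr, Sself hS]
        simp
      · exact MG hS hsE hsH hsR h0 hpr
    · rw [if_pos rfl, if_neg hsp, sub_zero, LemC hS hsp r, MA hS hsE hsH hsR h0 hsp]
  · by_cases hsp : s₁ = p
    · rw [hsp, if_neg hqr, if_pos rfl, zero_sub, hS.2.1 (E n p q) (E n r p),
        LemC hS hqr p, MA hS hsE hsH hsR h0 hqr, smul_neg]
    · rw [Z1 hS hqr hsp, if_neg hqr, if_neg hsp]
      simp

include hS hsE hsH hsR in
lemma coreMain (hn2 : 2 ≤ n) :
    ∃ c : ℂ, (starRingEnd ℂ) c = c ∧ ∀ x y : Mat n, S x y = c • (x * y - y * x) := by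
  have h0 : (⟨0, by omega⟩ : Fin n) ≠ ⟨1, by omega⟩ := by
    simp [Fin.ext_iff]
  set a0 : Fin n := ⟨0, by omega⟩
  set b0 : Fin n := ⟨1, by omega⟩
  refine ⟨S (E n a0 a0) (E n a0 b0) a0 b0, StepIII hsE, ?_⟩
  have hunit : ∀ (p q : Fin n) (yy : Mat n),
      S (E n p q) yy = (S (E n a0 a0) (E n a0 b0) a0 b0) • (E n p q * yy - yy * E n p q) := by
    intro p q yy
    induction yy using Matrix.induction_on' with
    | h_zero => rw [(hS.2.2.1 _).map_zero]; simp
    | h_add M N hM hN =>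
      rw [Sadd2 hS, hM, hN, mul_add, add_mul]
      rw [smul_sub, smul_sub, smul_sub, smul_add, smul_add]
      abel
    | h_std_basis i j x =>
      have hsb : Matrix.single i j x = x • E n i j := by
        unfold E; rw [Matrix.smul_single, smul_eq_mul, mul_one]
      rw [hsb, Ssmul2 hS, SU hS hsE hsH hsR h0 p q i j, mul_smul_comm, smul_mul_assoc]
      module
  intro x y
  induction x using Matrix.induction_on' with
  | h_zero => rw [(hS.2.2.2 _).map_zero]; simp
  | h_add M N hM hN =>
    rw [Sadd1 hS, hM, hN, mul_add, add_mul]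
    rw [smul_sub, smul_sub, smul_sub, smul_add, smul_add]
    abel
  | h_std_basis i j c =>
    have hsb : Matrix.single i j c = c • E n i j := by
      unfold E; rw [Matrix.smul_single, smul_eq_mul, mul_one]
    rw [hsb, Ssmul1 hS, hunit i j y, mul_smul_comm, smul_mul_assoc]
    module

end Const

lemma trace_E {n : ℕ} (i j : Fin n) : Matrix.trace (E n i j) = if i = j then 1 else 0 := by
  simp only [Matrix.trace, Matrix.diag, E_apply]
  by_cases h : i = j
  · subst h; simp
  · simp [h, fun x => show ¬(i = x ∧ j = x) from fun hc => h (hc.1.trans hc.2.symm)]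

lemma psd_Ediag {n : ℕ} (a : Fin n) : (E n a a).PosSemidef := by
  have hdiag : E n a a = Matrix.diagonal (fun i => if a = i then (1:ℂ) else 0) := by
    ext p q
    rw [E_apply, Matrix.diagonal]
    by_cases h : p = q
    · subst h; simp
    · simp only [Matrix.of_apply, h, if_neg h]
      rw [if_neg (fun hc : a = p ∧ a = q => h (hc.1.symm.trans hc.2))]
      simp
  rw [hdiag]
  refine Matrix.PosSemidef.diagonal ?_
  rw [Pi.le_def]
  intro i
  simp only [Pi.zero_apply]
  split_ifs
  · exact zero_le_one
  · exact le_refl _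
  
lemma half_psd {n : ℕ} {M : Mat n} (h : M.PosSemidef) : ((2⁻¹:ℂ) • M).PosSemidef := by
  constructor
  · show ((2⁻¹:ℂ) • M)ᴴ = _
    rw [Matrix.conjTranspose_smul, h.1.eq]
    norm_num
  · intro x
    refine (h.smul (a := (2⁻¹:ℂ)) ?_).2 x
    rw [show ((2⁻¹:ℂ)) = (((2:ℝ)⁻¹:ℝ):ℂ) by norm_num]
    exact Complex.zero_le_real.mpr (by norm_num)

end Stmt4Aux



open Stmt4Aux

/-- a bilinear state-rendering function `Θ` reducing to `ρM` on
commuting pairs, with `Θ_ρ` Hilbert–Schmidt self-adjoint and positive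
semidefinite for every state `ρ`, is a convex combination
`Θ_ρ(M) = μρM + (1−μ)Mρ` with `μ ∈ [0,1]` of the right and left blooms. -/
theorem stmt_4 (n : ℕ) (hn : 1 ≤ n) (Θ : Mat n → Mat n → Mat n)
    (hlin_rho : ∀ M : Mat n, IsLinearMap ℂ fun ρ => Θ ρ M)
    (hlin_M : ∀ ρ : Mat n, IsLinearMap ℂ fun M => Θ ρ M)
    (hcomm : ∀ ρ M : Mat n, ρ * M = M * ρ → Θ ρ M = ρ * M)
    (hsa : ∀ ρ : Mat n, ρ.PosSemidef → Matrix.trace ρ = 1 →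
      ∀ X Y : Mat n, Matrix.trace ((Θ ρ X)ᴴ * Y) = Matrix.trace (Xᴴ * Θ ρ Y))
    (hpos : ∀ ρ : Mat n, ρ.PosSemidef → Matrix.trace ρ = 1 →
      ∀ M : Mat n, ∃ r : ℝ, 0 ≤ r ∧ Matrix.trace (Mᴴ * Θ ρ M) = (r : ℂ)) :
    ∃ μ : ℝ, 0 ≤ μ ∧ μ ≤ 1 ∧ ∀ ρ M : Mat n,
      Θ ρ M = (μ : ℂ) • (ρ * M) + (1 - (μ : ℂ)) • (M * ρ) := by
  rcases Nat.lt_or_ge n 2 with hn1 | hn2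
  · -- n = 1 : everything commutes
    have hn' : n = 1 := by omega
    subst hn'
    refine ⟨1, zero_le_one, le_refl 1, ?_⟩
    intro ρ M
    have hcom : ρ * M = M * ρ := by
      ext i j
      have hi : i = 0 := Subsingleton.elim _ _
      have hj : j = 0 := Subsingleton.elim _ _
      subst hi; subst hj
      simp only [Matrix.mul_apply, Fin.sum_univ_one]
      exact mul_comm _ _
    rw [hcomm ρ M hcom]
    norm_num
  · -- main case, n ≥ 2
    classical
    set S : Mat n → Mat n → Mat n := fun ρ M => Θ ρ M - (2⁻¹:ℂ) • (ρ*M + M*ρ) with hSdef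
    -- linearity helpers for Θ
    have Tadd1 : ∀ (M x y : Mat n), Θ (x+y) M = Θ x M + Θ y M := fun M x y =>
      (hlin_rho M).map_add x y
    have Tsmul1 : ∀ (M : Mat n) (c : ℂ) (x : Mat n), Θ (c • x) M = c • Θ x M := fun M c x =>
      (hlin_rho M).map_smul c x
    have Tsub1 : ∀ (M x y : Mat n), Θ (x-y) M = Θ x M - Θ y M := fun M x y =>
      (IsLinearMap.mk' _ (hlin_rho M)).map_sub x y
    have Tadd2 : ∀ (ρ x y : Mat n), Θ ρ (x+y) = Θ ρ x + Θ ρ y := fun ρ x y =>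
      (hlin_M ρ).map_add x y
    have Tsmul2 : ∀ (ρ : Mat n) (c : ℂ) (x : Mat n), Θ ρ (c • x) = c • Θ ρ x := fun ρ c x =>
      (hlin_M ρ).map_smul c x
    -- Bil S
    have hS : Bil S := by
      refine ⟨?_, ?_, ?_, ?_⟩
      · intro x y h
        simp only [hSdef]
        rw [hcomm x y h, ← h]
        module
      · intro x y
        have eL : Θ (x+y) (x+y) = x*x + y*y + (Θ x y + Θ y x) := by
          rw [Tadd1, Tadd2, Tadd2, hcomm x x rfl, hcomm y y rfl]
          abel
        have eR : (x+y)*(x+y) = x*x + y*y + (x*y + y*x) := by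
          rw [mul_add, add_mul, add_mul]
          abel
        have key : Θ x y + Θ y x = x*y + y*x := by
          have h := hcomm (x+y) (x+y) rfl
          rw [eL, eR] at h
          exact add_left_cancel h
        simp only [hSdef]
        rw [eq_sub_of_add_eq key]
        module
      · intro x
        constructor
        · intro y z
          simp only [hSdef]
          rw [Tadd2, mul_add, add_mul]
          module
        · intro c y
          simp only [hSdef]
          rw [Tsmul2, mul_smul_comm, smul_mul_assoc]
          module
      · intro y
        constructor
        · intro x z
          simp only [hSdef]
          rw [Tadd1, add_mul, mul_add]
          module
        · intro c x
          simp only [hSdef]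
          rw [Tsmul1, smul_mul_assoc, mul_smul_comm]
          module
    -- transfer of self-adjointness to S, entrywise
    have star4_of : ∀ ρ : Mat n, ρᴴ = ρ →
        (∀ X Y, Matrix.trace ((Θ ρ X)ᴴ * Y) = Matrix.trace (Xᴴ * Θ ρ Y)) → Star4 S ρ := by
      intro ρ hherm hP k l p q
      have h : Matrix.trace ((S ρ (E n k l))ᴴ * E n p q)
          = Matrix.trace ((E n k l)ᴴ * S ρ (E n p q)) := by
        simp only [hSdef]
        rw [Matrix.conjTranspose_sub, Matrix.conjTranspose_smul, Matrix.conjTranspose_add,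
          Matrix.conjTranspose_mul, Matrix.conjTranspose_mul, hherm]
        rw [Matrix.sub_mul, Matrix.mul_sub, Matrix.trace_sub, Matrix.trace_sub, hP]
        congr 1
        rw [smul_mul_assoc, mul_smul_comm, Matrix.trace_smul, Matrix.trace_smul]
        have hst : (star (2⁻¹:ℂ)) = 2⁻¹ := by
          rw [star_inv₀]
          norm_num
        rw [hst]
        congr 1
        rw [add_mul, mul_add, Matrix.trace_add, Matrix.trace_add]
        congr 1
        · rw [mul_assoc]
        · rw [mul_assoc, Matrix.trace_mul_comm, mul_assoc]
      rw [trace_cT_mul, trace_E_cT_mul] at h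
      exact h
    -- states
    have PE : ∀ a : Fin n, ∀ X Y,
        Matrix.trace ((Θ (E n a a) X)ᴴ * Y) = Matrix.trace (Xᴴ * Θ (E n a a) Y) := by
      intro a
      refine hsa _ (psd_Ediag a) ?_
      rw [trace_E]
      simp
    have hsE : ∀ a, Star4 S (E n a a) := by
      intro a
      refine star4_of _ ?_ (PE a)
      rw [E_conjT]
    -- hermitian combination helper
    have PComb : ∀ (w ea eb : Mat n),
        (∀ X Y, Matrix.trace ((Θ w X)ᴴ * Y) = Matrix.trace (Xᴴ * Θ w Y)) →
        (∀ X Y, Matrix.trace ((Θ ea X)ᴴ * Y) = Matrix.trace (Xᴴ * Θ ea Y)) →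
        (∀ X Y, Matrix.trace ((Θ eb X)ᴴ * Y) = Matrix.trace (Xᴴ * Θ eb Y)) →
        ∀ X Y, Matrix.trace ((Θ ((2:ℂ) • w - ea - eb) X)ᴴ * Y)
          = Matrix.trace (Xᴴ * Θ ((2:ℂ) • w - ea - eb) Y) := by
      intro w ea eb hw hea heb X Y
      have hexp : ∀ Z, Θ ((2:ℂ) • w - ea - eb) Z
          = (2:ℂ) • Θ w Z - Θ ea Z - Θ eb Z := by
        intro Z
        rw [Tsub1, Tsub1, Tsmul1]
      rw [hexp, hexp]
      rw [Matrix.conjTranspose_sub, Matrix.conjTranspose_sub, Matrix.conjTranspose_smul]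
      rw [Matrix.sub_mul, Matrix.sub_mul, Matrix.mul_sub, Matrix.mul_sub]
      rw [Matrix.trace_sub, Matrix.trace_sub, Matrix.trace_sub, Matrix.trace_sub]
      rw [smul_mul_assoc, mul_smul_comm, Matrix.trace_smul, Matrix.trace_smul]
      rw [hw, hea, heb]
      have hst : (star (2:ℂ)) = 2 := by
        rw [Complex.star_def, Complex.conj_ofNat]
      rw [hst]
    -- the H family
    have hsH : ∀ a b : Fin n, a ≠ b → Star4 S (E n a b + E n b a) := by
      intro a b hab
      have hA1 : (E n a a + E n a b)ᴴ * (E n a a + E n a b)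
          = E n a a + E n a b + E n b a + E n b b := by
        rw [Matrix.conjTranspose_add, E_conjT, E_conjT]
        rw [add_mul, mul_add, mul_add]
        simp [E_mul, Ne.symm hab]
        abel
      have hw1psd : ((2⁻¹:ℂ) • (E n a a + E n a b + E n b a + E n b b)).PosSemidef := by
        rw [← hA1]
        exact half_psd (Matrix.posSemidef_conjTranspose_mul_self _)
      have hw1tr : Matrix.trace ((2⁻¹:ℂ) • (E n a a + E n a b + E n b a + E n b b)) = 1 := by
        rw [Matrix.trace_smul, Matrix.trace_add, Matrix.trace_add, Matrix.trace_add]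
        rw [trace_E, trace_E, trace_E, trace_E]
        rw [if_pos rfl, if_pos rfl, if_neg hab, if_neg (Ne.symm hab)]
        norm_num
      have hPw := hsa _ hw1psd hw1tr
      have hdecomp : E n a b + E n b a
          = (2:ℂ) • ((2⁻¹:ℂ) • (E n a a + E n a b + E n b a + E n b b)) - E n a a - E n b b := by
        module
      have hP : ∀ X Y, Matrix.trace ((Θ (E n a b + E n b a) X)ᴴ * Y)
          = Matrix.trace (Xᴴ * Θ (E n a b + E n b a) Y) := by
        rw [hdecomp]
        exact PComb _ _ _ hPw (PE a) (PE b)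
      refine star4_of _ ?_ hP
      rw [Matrix.conjTranspose_add, E_conjT, E_conjT, add_comm]
    -- the R family
    have hsR : ∀ a b : Fin n, a ≠ b →
        Star4 S (Complex.I • E n a b - Complex.I • E n b a) := by
      intro a b hab
      have hA2 : (E n a a + Complex.I • E n a b)ᴴ * (E n a a + Complex.I • E n a b)
          = E n a a + Complex.I • E n a b + (-Complex.I) • E n b a + E n b b := by
        have hstar : star Complex.I = -Complex.I := by
          rw [Complex.star_def, Complex.conj_I]
        have hII : -Complex.I * Complex.I = 1 := by
          rw [neg_mul, Complex.I_mul_I, neg_neg]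
        rw [Matrix.conjTranspose_add, Matrix.conjTranspose_smul, E_conjT, E_conjT, hstar]
        rw [add_mul, mul_add, mul_add, smul_mul_assoc, smul_mul_assoc, mul_smul_comm,
          mul_smul_comm, smul_smul, hII, one_smul]
        simp only [E_mul, eq_self_iff_true, if_true]
        abel
      have hw2psd : ((2⁻¹:ℂ) • (E n a a + Complex.I • E n a b + (-Complex.I) • E n b a + E n b b)).PosSemidef := by
        rw [← hA2]
        exact half_psd (Matrix.posSemidef_conjTranspose_mul_self _)
      have hw2tr : Matrix.trace ((2⁻¹:ℂ) • (E n a a + Complex.I • E n a b + (-Complex.I) • E n b a + E n b b)) = 1 := by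
        rw [Matrix.trace_smul, Matrix.trace_add, Matrix.trace_add, Matrix.trace_add]
        rw [Matrix.trace_smul, Matrix.trace_smul]
        rw [trace_E, trace_E, trace_E, trace_E]
        rw [if_pos rfl, if_pos rfl, if_neg hab, if_neg (Ne.symm hab)]
        norm_num
      have hPw := hsa _ hw2psd hw2tr
      have hdecomp : Complex.I • E n a b - Complex.I • E n b a
          = (2:ℂ) • ((2⁻¹:ℂ) • (E n a a + Complex.I • E n a b + (-Complex.I) • E n b a + E n b b))
            - E n a a - E n b b := by
        module
      have hP : ∀ X Y, Matrix.trace ((Θ (Complex.I • E n a b - Complex.I • E n b a) X)ᴴ * Y)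
          = Matrix.trace (Xᴴ * Θ (Complex.I • E n a b - Complex.I • E n b a) Y) := by
        rw [hdecomp]
        exact PComb _ _ _ hPw (PE a) (PE b)
      refine star4_of _ ?_ hP
      rw [Matrix.conjTranspose_sub, Matrix.conjTranspose_smul, Matrix.conjTranspose_smul,
        E_conjT, E_conjT, Complex.star_def, Complex.conj_I]
      module
    -- core result
    obtain ⟨c, hcreal, hcS⟩ := coreMain hS hsE hsH hsR hn2
    have hre : ((c.re : ℂ)) = c := Complex.conj_eq_iff_re.mp hcreal
    have hfinal : ∀ ρ M : Mat n, Θ ρ M = (c + 2⁻¹) • (ρ*M) + (2⁻¹ - c) • (M*ρ) := by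
      intro ρ M
      have h1 := hcS ρ M
      simp only [hSdef] at h1
      rw [eq_add_of_sub_eq h1]
      module
    have h0 : (⟨0, by omega⟩ : Fin n) ≠ ⟨1, by omega⟩ := by
      simp [Fin.ext_iff]
    set a0 : Fin n := ⟨0, by omega⟩
    set b0 : Fin n := ⟨1, by omega⟩
    have htr1 : Matrix.trace (E n a0 a0) = 1 := by rw [trace_E]; simp
    -- lower bound
    obtain ⟨r1, hr1, hrt1⟩ := hpos (E n a0 a0) (psd_Ediag a0) htr1 (E n a0 b0)
    rw [hfinal] at hrt1
    rw [E_mul, E_mul, if_pos rfl, if_neg (Ne.symm h0), smul_zero, add_zero] at hrt1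
    rw [trace_E_cT_mul, Matrix.smul_apply, E_apply_same, smul_eq_mul, mul_one] at hrt1
    -- hrt1 : c + 2⁻¹ = r1
    obtain ⟨r2, hr2, hrt2⟩ := hpos (E n a0 a0) (psd_Ediag a0) htr1 (E n b0 a0)
    rw [hfinal] at hrt2
    rw [E_mul, E_mul, if_pos rfl, if_neg h0, smul_zero, zero_add] at hrt2
    rw [trace_E_cT_mul, Matrix.smul_apply, E_apply_same, smul_eq_mul, mul_one] at hrt2
    -- hrt2 : 2⁻¹ - c = r2
    have hre1 : c.re + 2⁻¹ = r1 := by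
      have : ((c.re + 2⁻¹ : ℝ) : ℂ) = (r1 : ℂ) := by
        push_cast
        rw [hre]
        exact hrt1
      exact_mod_cast this
    have hre2 : 2⁻¹ - c.re = r2 := by
      have : ((2⁻¹ - c.re : ℝ) : ℂ) = (r2 : ℂ) := by
        push_cast
        rw [hre]
        exact hrt2
      exact_mod_cast this
    refine ⟨c.re + 2⁻¹, by rw [hre1]; exact hr1, by nlinarith [hre2, hr2], ?_⟩
    intro ρ M
    rw [hfinal]
    have hc1 : ((c.re + 2⁻¹ : ℝ) : ℂ) = c + 2⁻¹ := by push_cast; rw [hre]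
    have hc2 : 1 - ((c.re + 2⁻¹ : ℝ) : ℂ) = 2⁻¹ - c := by push_cast; rw [hre]; ring
    rw [hc2, hc1]
end

section
/- Let n ≥ 1 and let g : M_n → M_n be a linear map with g(1) = 1 (equivalently, the Hilbert–Schmidt adjoint g† is trace-preserving) such that g([X,Y]) = [X, g†(Y)] for all X, Y ∈ M_n. Then there exists d ∈ ℂ such that g†(M) = d·Tr(M)·1 + (1 − d·n)·M for all M ∈ M_n. -/
open Matrix Kronecker BigOperators ComplexOrder

section HSHelpers
lemma lmul_std (n : ℕ) (i j p q : Fin n) (B : Mat n) :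
    (Matrix.single i j (1:ℂ) * B) p q = if p = i then B j q else 0 := by
  rcases eq_or_ne p i with rfl | hpi
  · simp
  · simp [hpi, Matrix.single_mul_apply_of_ne (h := hpi)]

lemma rmul_std (n : ℕ) (i j p q : Fin n) (B : Mat n) :
    (B * Matrix.single i j (1:ℂ)) p q = if q = j then B p i else 0 := by
  rcases eq_or_ne q j with rfl | hqj
  · simp
  · simp [hqj, Matrix.mul_single_apply_of_ne (hbj := hqj)]

lemma sum_std_diag (n : ℕ) : ∑ p : Fin n, Matrix.single p p (1:ℂ) = 1 := by
  ext i j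
  simp only [Matrix.sum_apply, Matrix.single, Matrix.of_apply, Matrix.one_apply]
  rcases eq_or_ne i j with rfl | hij
  · rw [Finset.sum_eq_single i] <;> simp +contextual [eq_comm]
  · rw [Finset.sum_eq_zero, if_neg hij]
    intro x _
    rw [if_neg]
    rintro ⟨rfl, rfl⟩
    exact hij rfl

lemma trace_std (n : ℕ) (k l : Fin n) :
    (Matrix.single k l (1:ℂ)).trace = if k = l then 1 else 0 := by
  rcases eq_or_ne k l with rfl | hkl
  · simp [Matrix.trace_single_eq_same]
  · rw [Matrix.trace_single_eq_of_ne k l (1:ℂ) hkl, if_neg hkl]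

lemma hs_struct (n : ℕ) (hn : 2 ≤ n) (h : Mat n → Mat n)
    (hid : ∀ X Y : Mat n, X * h Y - h Y * X = h X * Y - Y * h X)
    (htr : ∀ Y : Mat n, (h Y).trace = Y.trace) :
    ∃ d : ℂ, ∀ M : Mat n,
      h M = d • Matrix.trace M • (1 : Mat n) + (1 - d * (n : ℂ)) • M := by
  have hn0 : (n : ℂ) ≠ 0 := by
    simp only [ne_eq, Nat.cast_eq_zero]; omega
  obtain ⟨i0, i1, hne⟩ : ∃ a b : Fin n, a ≠ b :=
    ⟨⟨0, by omega⟩, ⟨1, by omega⟩, by simp [Fin.ext_iff]⟩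
  obtain ⟨w, hw⟩ : ∃ w : Fin n → Fin n, ∀ k, w k ≠ k := by
    refine ⟨fun k => if k = i0 then i1 else i0, fun k => ?_⟩
    rcases eq_or_ne k i0 with rfl | hk
    · simpa using hne.symm
    · simpa [hk] using hk.symm
  set A : Fin n → Fin n → Mat n := fun k l => h (Matrix.single k l 1) with hA
  -- entrywise commutation relation
  have rel' : ∀ i j k l p q : Fin n,
      (if p = i then A k l j q else 0) - (if q = j then A k l p i else 0)
        = (if q = l then A i j p k else 0) - (if p = k then A i j l q else 0) := by
    intro i j k l p q
    have H := congrFun (congrFun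
      (hid (Matrix.single i j 1) (Matrix.single k l 1)) p) q
    simpa only [Matrix.sub_apply, lmul_std, rmul_std] using H
  -- off-diagonal entries vanish away from (k,l)
  have off1 : ∀ k l p q : Fin n, p ≠ q → q ≠ l → A k l p q = 0 := by
    intro k l p q hpq hql
    have H := rel' (w k) p k l (w k) q
    simpa [hw k, hql, hpq.symm] using H
  have off : ∀ k l p q : Fin n, p ≠ q → ¬(p = k ∧ q = l) → A k l p q = 0 := by
    intro k l p q hpq hnot
    rcases eq_or_ne q l with rfl | hql
    · have hpk : p ≠ k := fun hp => hnot ⟨hp, rfl⟩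
      have H := rel' (w k) p k q (w k) q
      have H0 : A (w k) p (w k) k = 0 := off1 (w k) p (w k) k (hw k) (fun hk => hpk hk.symm) 
      simpa [hw k, hpq.symm, H0] using H
    · exact off1 k l p q hpq hql
  -- diagonal relation
  have diagrel : ∀ i q k l : Fin n,
      A k l q q - A k l i i
        = (if q = l then A i q i k else 0) - (if i = k then A i q l q else 0) := by
    intro i q k l
    simpa using rel' i q k l i q
  -- for k ≠ l all diagonal entries are equal
  have diagc : ∀ k l : Fin n, k ≠ l → ∀ q, A k l q q = A k l (w k) (w k) := by
    intro k l hkl q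
    have H := diagrel (w k) q k l
    rcases eq_or_ne q l with rfl | hql
    · have H0 : A (w k) q (w k) k = 0 := off (w k) q (w k) k (hw k) (by
        rintro ⟨-, rfl⟩; exact hkl rfl)
      rw [if_pos rfl, if_neg (hw k), sub_zero, H0] at H
      linear_combination H
    · rw [if_neg hql, if_neg (hw k), sub_zero] at H
      linear_combination H
  -- and they are zero
  have diag0 : ∀ k l : Fin n, k ≠ l → ∀ q, A k l q q = 0 := by
    intro k l hkl q
    have ht := htr (Matrix.single k l 1)
    rw [trace_std n k l, if_neg hkl] at ht
    have hsum : (A k l).trace = (n : ℂ) * A k l (w k) (w k) := by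
      rw [Matrix.trace]
      calc ∑ i, (A k l).diag i = ∑ _i : Fin n, A k l (w k) (w k) :=
            Finset.sum_congr rfl fun i _ => diagc k l hkl i
        _ = (n : ℂ) * A k l (w k) (w k) := by
            rw [Finset.sum_const, Finset.card_univ, Fintype.card_fin, nsmul_eq_mul]
    rw [hsum] at ht
    rw [diagc k l hkl q]
    exact (mul_eq_zero.mp ht).resolve_left hn0
  -- for A k k, off-k diagonal entries are all equal
  have hdiagk : ∀ k p q : Fin n, p ≠ k → q ≠ k → A k k p p = A k k q q := by
    intro k p q hpk hqk
    have H := diagrel q p k k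
    rw [if_neg hpk, if_neg hqk, sub_zero, sub_eq_zero] at H
    exact H
  -- trace relation on A k k
  have htrk : ∀ k : Fin n, A k k k k + (n : ℂ) * A k k (w k) (w k)
      - A k k (w k) (w k) = 1 := by
    intro k
    have ht := htr (Matrix.single k k 1)
    rw [trace_std n k k, if_pos rfl] at ht
    have e : ∀ q : Fin n, (A k k).diag q
        = (if q = k then A k k k k - A k k (w k) (w k) else 0) + A k k (w k) (w k) := by
      intro q
      rcases eq_or_ne q k with rfl | hqk
      · simp [Matrix.diag]
      · rw [if_neg hqk, zero_add]
        exact hdiagk k q (w k) hqk (hw k)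
    rw [Matrix.trace, Finset.sum_congr rfl fun q _ => e q, Finset.sum_add_distrib,
      Finset.sum_ite_eq' Finset.univ k, if_pos (Finset.mem_univ k),
      Finset.sum_const, Finset.card_univ, Fintype.card_fin, nsmul_eq_mul] at ht
    linear_combination ht
  -- the two corner relations
  have E1 : ∀ k l : Fin n, k ≠ l → A k l k l = A k k k k - A k k l l := by
    intro k l hkl
    have H := rel' k k k l k l
    simpa [hkl, hkl.symm] using H
  have E2 : ∀ k l : Fin n, k ≠ l → A k l k l = A l l l l - A l l k k := by
    intro k l hkl
    have H := rel' l l k l k l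
    rw [if_neg hkl, if_pos rfl, if_pos rfl, if_pos rfl, zero_sub] at H
    linear_combination -H
  -- ν is constant
  have hνc : ∀ k l : Fin n, k ≠ l →
      A k k (w k) (w k) = A l l (w l) (w l) := by
    intro k l hkl
    have e1 := E1 k l hkl
    have e2 := E2 k l hkl
    have h1 : A k k l l = A k k (w k) (w k) := hdiagk k l (w k) (fun h => hkl h.symm) (hw k)
    have h2 : A l l k k = A l l (w l) (w l) := hdiagk l k (w l) hkl (hw l)
    have t1 := htrk k
    have t2 := htrk l
    rw [h1] at e1; rw [h2] at e2
    have hn' : (n : ℂ) * A k k (w k) (w k) = (n : ℂ) * A l l (w l) (w l) := by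
      linear_combination e1 - e2 + t1 - t2
    exact mul_left_cancel₀ hn0 hn'
  set d : ℂ := A i0 i0 (w i0) (w i0) with hd
  have hν : ∀ k : Fin n, A k k (w k) (w k) = d := by
    intro k
    rcases eq_or_ne k i0 with rfl | hk
    · rfl
    · exact hνc k i0 hk
  have diagval : ∀ k q : Fin n, q ≠ k → A k k q q = d := by
    intro k q hqk
    rw [hdiagk k q (w k) hqk (hw k), hν k]
  have kkval : ∀ k : Fin n, A k k k k = 1 - (n : ℂ) * d + d := by
    intro k
    have := htrk k
    rw [hν k] at this
    linear_combination this
  have klval : ∀ k l : Fin n, k ≠ l → A k l k l = 1 - (n : ℂ) * d := by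
    intro k l hkl
    rw [E1 k l hkl, kkval k, diagval k l (fun h => hkl h.symm)]
    ring
  -- the basis formula
  have basis : ∀ k l : Fin n, A k l
      = d • (Matrix.single k l (1:ℂ)).trace • (1 : Mat n)
        + (1 - d * (n:ℂ)) • Matrix.single k l (1:ℂ) := by
    intro k l
    ext p q
    rw [trace_std n k l]
    simp only [Matrix.add_apply, Matrix.smul_apply, Matrix.one_apply,
      Matrix.single, Matrix.of_apply, smul_eq_mul]
    rcases eq_or_ne k l with rfl | hkl
    · rw [if_pos rfl]
      rcases eq_or_ne p q with rfl | hpq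
      · rcases eq_or_ne p k with rfl | hpk
        · rw [kkval p, if_pos rfl, if_pos ⟨rfl, rfl⟩]; ring
        · rw [diagval k p hpk, if_pos rfl,
            if_neg (by rintro ⟨rfl, -⟩; exact hpk rfl)]; ring
      · rw [off k k p q hpq (by rintro ⟨rfl, rfl⟩; exact hpq rfl), if_neg hpq,
          if_neg (by rintro ⟨rfl, rfl⟩; exact hpq rfl)]; ring
    · rw [if_neg hkl]
      by_cases hp : k = p ∧ l = q
      · obtain ⟨rfl, rfl⟩ := hp
        rw [klval k l hkl, if_neg hkl, if_pos ⟨rfl, rfl⟩]; ring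
      · rw [if_neg hp]
        rcases eq_or_ne p q with rfl | hpq
        · rw [diag0 k l hkl p, if_pos rfl]; ring
        · rw [off k l p q hpq (by rintro ⟨rfl, rfl⟩; exact hp ⟨rfl, rfl⟩), if_neg hpq]
          ring
  refine ⟨d, fun M => ?_⟩
  set B : Mat n := h M with hB
  -- relation between B and M
  have relM : ∀ i j p q : Fin n,
      (if p = i then B j q else 0) - (if q = j then B p i else 0)
        = (1 - d * (n:ℂ)) * ((if p = i then M j q else 0) - (if q = j then M p i else 0)) := by
    intro i j p q
    have H := congrFun (congrFun (hid (Matrix.single i j 1) M) p) q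
    rw [Matrix.sub_apply, Matrix.sub_apply, lmul_std, rmul_std] at H
    have hAij : A i j * M - M * A i j
        = (1 - d * (n:ℂ)) • (Matrix.single i j (1:ℂ) * M
            - M * Matrix.single i j (1:ℂ)) := by
      rw [basis i j]
      simp only [Matrix.add_mul, Matrix.mul_add, Matrix.smul_mul, Matrix.mul_smul,
        Matrix.one_mul, Matrix.mul_one, smul_sub]
      abel
    have H2 := congrFun (congrFun hAij p) q
    rw [Matrix.sub_apply, Matrix.smul_apply, Matrix.sub_apply, lmul_std, rmul_std,
      smul_eq_mul] at H2
    exact H.trans H2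
  have offM : ∀ p q : Fin n, p ≠ q → B p q = (1 - d * (n:ℂ)) * M p q := by
    intro p q hpq
    have H := relM p p p q
    simpa [hpq.symm] using H
  have diagM : ∀ i j : Fin n, B j j - B i i = (1 - d * (n:ℂ)) * (M j j - M i i) := by
    intro i j
    simpa using relM i j i j
  have hc : ∀ j : Fin n, B j j = (1 - d * (n:ℂ)) * M j j + (B i0 i0 - (1 - d * (n:ℂ)) * M i0 i0) := by
    intro j
    have := diagM i0 j
    linear_combination this
  have htrM : B.trace = M.trace := htr M
  have hcd : B i0 i0 - (1 - d * (n:ℂ)) * M i0 i0 = d * M.trace := by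
    have e1 : B.trace = (1 - d * (n:ℂ)) * M.trace
        + (n : ℂ) * (B i0 i0 - (1 - d * (n:ℂ)) * M i0 i0) := by
      simp only [Matrix.trace, Matrix.diag]
      rw [Finset.sum_congr rfl fun j _ => hc j,
        Finset.sum_add_distrib, Finset.sum_const, Finset.card_univ, Fintype.card_fin,
        nsmul_eq_mul, ← Finset.mul_sum]
    rw [htrM] at e1
    have h2 : (n : ℂ) * (B i0 i0 - (1 - d * (n:ℂ)) * M i0 i0)
        = (n : ℂ) * (d * M.trace) := by
      linear_combination -e1
    exact mul_left_cancel₀ hn0 h2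
  ext p q
  simp only [Matrix.add_apply, Matrix.smul_apply, Matrix.one_apply, smul_eq_mul]
  rcases eq_or_ne p q with rfl | hpq
  · rw [hc p, hcd, if_pos rfl]; ring
  · rw [offM p q hpq, if_neg hpq]; ring
end HSHelpers

/-- a linear map `g` on `M_n` with `g(1) = 1` satisfying
`g([X,Y]) = [X, g†(Y)]` (with `g†` the Hilbert–Schmidt adjoint) has
`g†(M) = d·Tr(M)·1 + (1 − d·n)·M` for some `d ∈ ℂ`. -/
theorem stmt_7 (n : ℕ) (hn : 1 ≤ n) (g : Mat n → Mat n) (hg : IsLinearMap ℂ g)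
    (hg1 : g 1 = 1)
    (hcomm : ∀ X Y : Mat n,
      g (X * Y - Y * X) = X * hsAdj g Y - hsAdj g Y * X) :
    ∃ d : ℂ, ∀ M : Mat n,
      hsAdj g M = d • Matrix.trace M • (1 : Mat n) + (1 - d * (n : ℂ)) • M := by
  rcases eq_or_lt_of_le hn with hn1 | hn2
  · -- n = 1
    subst hn1
    refine ⟨0, fun M => ?_⟩
    have h00 : Matrix.single (0 : Fin 1) (0 : Fin 1) (1:ℂ) = (1 : Mat 1) := by
      ext i j
      fin_cases i <;> fin_cases j <;> simp [Matrix.single]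
    have hM : hsAdj g M = M := by
      ext p q
      obtain rfl : p = 0 := Subsingleton.elim p 0
      obtain rfl : q = 0 := Subsingleton.elim q 0
      simp only [hsAdj, Matrix.of_apply]
      rw [h00, hg1, Matrix.conjTranspose_one, Matrix.one_mul]
      simp [Matrix.trace]
    rw [hM]
    norm_num
  · -- 2 ≤ n
    set lg : Mat n →ₗ[ℂ] Mat n := IsLinearMap.mk' g hg with hlg
    have hid : ∀ X Y : Mat n,
        X * hsAdj g Y - hsAdj g Y * X = hsAdj g X * Y - Y * hsAdj g X := by
      intro X Y
      have e1 := hcomm X Y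
      have e2 := hcomm Y X
      have e3 : g (Y * X - X * Y) = -(g (X * Y - Y * X)) := by
        rw [← neg_sub (X * Y) (Y * X)]
        exact map_neg lg _
      rw [e1, e2] at e3
      have e4 : X * hsAdj g Y - hsAdj g Y * X
          = -(Y * hsAdj g X - hsAdj g X * Y) := by
        rw [e3, neg_neg]
      rw [e4, neg_sub]
    have htr : ∀ Y : Mat n, (hsAdj g Y).trace = Y.trace := by
      intro Y
      have key : ∑ p : Fin n, (g (Matrix.single p p (1:ℂ)))ᴴ = 1 := by
        calc ∑ p : Fin n, (g (Matrix.single p p (1:ℂ)))ᴴ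
            = (∑ p : Fin n, g (Matrix.single p p (1:ℂ)))ᴴ :=
              (Matrix.conjTranspose_sum _ _).symm
          _ = (g (∑ p : Fin n, Matrix.single p p (1:ℂ)))ᴴ :=
              congrArg Matrix.conjTranspose (map_sum lg _ _).symm
          _ = (g 1)ᴴ := by rw [sum_std_diag]
          _ = 1 := by rw [hg1, Matrix.conjTranspose_one]
      calc (hsAdj g Y).trace
          = ∑ p : Fin n, ((g (Matrix.single p p (1:ℂ)))ᴴ * Y).trace := by
            simp [hsAdj, Matrix.trace, Matrix.diag]
        _ = ((∑ p : Fin n, (g (Matrix.single p p (1:ℂ)))ᴴ) * Y).trace := by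
            rw [← Matrix.trace_sum, ← Finset.sum_mul]
        _ = Y.trace := by rw [key, Matrix.one_mul]
    exact hs_struct n hn2 (hsAdj g) hid htr
end

section
/- Let n ≥ 1 and let g : M_n → M_n be a linear map with g(1) = 1 such that g([X,Y]) + [X,Y] = −[X, g‡(Y)] for all X, Y ∈ M_n, where g‡(M) := (g†(M†))† and g† is the Hilbert–Schmidt adjoint of g. Then there exists d ∈ ℂ such that g‡(M) = d·Tr(M)·1 + (1 − d·n)·M for all M ∈ M_n. -/
open Matrix Kronecker BigOperators ComplexOrder

namespace Stmt8Aux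
variable {n : ℕ}

lemma hsAdj_add (g : Mat n → Mat n) (Y Z : Mat n) :
    hsAdj g (Y + Z) = hsAdj g Y + hsAdj g Z := by
  ext i j
  simp [hsAdj, Matrix.mul_add]

lemma hsAdj_smul (g : Mat n → Mat n) (a : ℂ) (Y : Mat n) :
    hsAdj g (a • Y) = a • hsAdj g Y := by
  ext i j
  simp [hsAdj, Matrix.mul_smul]

/-- `g‡` as a linear map. -/
noncomputable def hmapL (n : ℕ) (g : Mat n → Mat n) : Mat n →ₗ[ℂ] Mat n where
  toFun M := (hsAdj g Mᴴ)ᴴ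
  map_add' M N := by
    show (hsAdj g (M + N)ᴴ)ᴴ = (hsAdj g Mᴴ)ᴴ + (hsAdj g Nᴴ)ᴴ
    rw [conjTranspose_add, hsAdj_add, conjTranspose_add]
  map_smul' a M := by
    show (hsAdj g (a • M)ᴴ)ᴴ = (RingHom.id ℂ) a • (hsAdj g Mᴴ)ᴴ
    rw [conjTranspose_smul, hsAdj_smul, conjTranspose_smul, RingHom.id_apply, star_star]

lemma one_eq_sum : (1 : Mat n) = ∑ i, Matrix.single i i (1:ℂ) := by
  ext p q
  by_cases h : p = q
  · subst h
    simp [Matrix.sum_apply, Matrix.single, Matrix.one_apply]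
  · rw [Matrix.one_apply_ne h, Matrix.sum_apply]
    refine (Finset.sum_eq_zero fun i _ => ?_).symm
    simp only [Matrix.single, Matrix.of_apply]
    exact if_neg (by rintro ⟨rfl, rfl⟩; exact h rfl)

lemma trace_hmap (g : Mat n → Mat n) (hg : IsLinearMap ℂ g) (hg1 : g 1 = 1) (M : Mat n) :
    Matrix.trace ((hsAdj g Mᴴ)ᴴ) = Matrix.trace M := by
  have h1 : Matrix.trace (hsAdj g Mᴴ) = Matrix.trace Mᴴ := by
    have expand : Matrix.trace (hsAdj g Mᴴ) =
        ∑ i, Matrix.trace ((g (Matrix.single i i (1:ℂ)))ᴴ * Mᴴ) := rfl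
    have gsum : ∑ i, g (Matrix.single i i (1:ℂ))
        = g (∑ i, Matrix.single i i (1:ℂ)) := by
      have := map_sum (IsLinearMap.mk' g hg) (fun i => Matrix.single i i (1:ℂ))
        Finset.univ
      simp only [IsLinearMap.mk'_apply] at this
      exact this.symm
    have step : ∑ i, (g (Matrix.single i i (1:ℂ)))ᴴ * Mᴴ
        = (∑ i, (g (Matrix.single i i (1:ℂ))))ᴴ * Mᴴ := by
      rw [conjTranspose_sum, Finset.sum_mul]
    rw [expand, ← Matrix.trace_sum, step, gsum, ← one_eq_sum, hg1, conjTranspose_one, one_mul]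
  rw [Matrix.trace_conjTranspose, h1, Matrix.trace_conjTranspose, star_star]

lemma trace_E (k l : Fin n) :
    Matrix.trace (Matrix.single k l (1:ℂ)) = if k = l then 1 else 0 := by
  by_cases h : k = l
  · subst h
    simp [Matrix.trace, Matrix.diag, Matrix.single, Finset.sum_ite_eq]
  · rw [if_neg h, Matrix.trace]
    refine Finset.sum_eq_zero fun i _ => ?_
    simp only [Matrix.diag, Matrix.single, Matrix.of_apply]
    exact if_neg (by rintro ⟨rfl, rfl⟩; exact h rfl)

end Stmt8Aux

/-- a linear map `g` on `M_n` with `g(1) = 1` satisfying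
`g([X,Y]) + [X,Y] = −[X, g‡(Y)]` (where `g‡(M) := (g†(Mᴴ))ᴴ`, `g†` the
Hilbert–Schmidt adjoint) has `g‡(M) = d·Tr(M)·1 + (1 − d·n)·M` for some `d ∈ ℂ`. -/
theorem stmt_8 (n : ℕ) (hn : 1 ≤ n) (g : Mat n → Mat n) (hg : IsLinearMap ℂ g)
    (hg1 : g 1 = 1)
    (hcomm : ∀ X Y : Mat n,
      g (X * Y - Y * X) + (X * Y - Y * X) =
        -(X * (hsAdj g Yᴴ)ᴴ - (hsAdj g Yᴴ)ᴴ * X)) :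
    ∃ d : ℂ, ∀ M : Mat n,
      (hsAdj g Mᴴ)ᴴ = d • Matrix.trace M • (1 : Mat n) + (1 - d * (n : ℂ)) • M := by
  classical
  set hL := Stmt8Aux.hmapL n g with hLdef
  have hLapp : ∀ M : Mat n, hL M = (hsAdj g Mᴴ)ᴴ := fun M => rfl
  have htr : ∀ M : Mat n, Matrix.trace (hL M) = Matrix.trace M := fun M =>
    Stmt8Aux.trace_hmap g hg hg1 M
  have hcomm' : ∀ X Y : Mat n,
      g (X * Y - Y * X) + (X * Y - Y * X) = -(X * hL Y - hL Y * X) := fun X Y => hcomm X Y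
  -- commutation preservation
  have hcommute : ∀ X Y : Mat n, X * Y = Y * X → X * hL Y = hL Y * X := by
    intro X Y hXY
    have e := hcomm' X Y
    rw [hXY, sub_self, hg.map_zero, add_zero] at e
    have : X * hL Y - hL Y * X = 0 := by rw [← neg_eq_zero, ← e]
    exact sub_eq_zero.mp this
  -- the symmetric identity
  have key : ∀ X Y : Mat n, X * hL Y - hL Y * X = hL X * Y - Y * hL X := by
    intro X Y
    have e1 := hcomm' X Y
    have e2 := hcomm' Y X
    have hneg : Y * X - X * Y = -(X * Y - Y * X) := (neg_sub _ _).symm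
    rw [hneg, hg.map_neg, ← neg_add] at e2
    -- e2 : -(g Z + Z) = -(Y * hL X - hL X * Y)
    have e3 : g (X * Y - Y * X) + (X * Y - Y * X) = Y * hL X - hL X * Y := neg_injective e2
    calc X * hL Y - hL Y * X = -(g (X * Y - Y * X) + (X * Y - Y * X)) := by rw [e1, neg_neg]
      _ = -(Y * hL X - hL X * Y) := by rw [e3]
      _ = hL X * Y - Y * hL X := neg_sub _ _
  rcases lt_or_ge n 2 with hn2 | hn2
  · -- n = 1
    have hn1 : n = 1 := by omega
    subst hn1
    refine ⟨0, fun M => ?_⟩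
    have hMtr : hL M 0 0 = M 0 0 := by
      have e := htr M
      simpa [Matrix.trace, Matrix.diag, Fin.sum_univ_one] using e
    rw [← hLapp]
    ext p q
    have hp : p = 0 := Subsingleton.elim _ _
    have hq : q = 0 := Subsingleton.elim _ _
    subst hp; subst hq
    simp [hMtr]
  · -- n ≥ 2
    set i0 : Fin n := ⟨0, by omega⟩ with hi0
    set i1 : Fin n := ⟨1, by omega⟩ with hi1
    have hi01 : i0 ≠ i1 := by simp [hi0, hi1, Fin.ext_iff]
    set E : Fin n → Fin n → Mat n := fun i j => Matrix.single i j (1:ℂ) with hE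
    set m : Fin n → Fin n := fun k => if k = i0 then i1 else i0 with hm
    have hmne : ∀ k, m k ≠ k := by
      intro k
      by_cases hk : k = i0
      · subst hk; simpa [hm] using hi01.symm
      · simpa [hm, hk] using Ne.symm hk
    -- diagonal basis images
    have factA : ∀ k r s, r ≠ s → hL (E k k) r s = 0 := by
      intro k r s hrs
      have hc : E s s * E k k = E k k * E s s := by
        by_cases hsk : s = k
        · subst hsk; rfl
        · rw [hE]; dsimp only
          rw [Matrix.single_mul_single_of_ne (c := (1:ℂ)) s s _ hsk (1:ℂ),
            Matrix.single_mul_single_of_ne (c := (1:ℂ)) k k _ (Ne.symm hsk) (1:ℂ)]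
      have e := hcommute (E s s) (E k k) hc
      have e2 : (E s s * hL (E k k)) r s = (hL (E k k) * E s s) r s := by rw [e]
      simpa [hE, hrs] using e2.symm
    have factB : ∀ k p q, p ≠ k → q ≠ k → hL (E k k) p p = hL (E k k) q q := by
      intro k p q hp hq
      have hc : E p q * E k k = E k k * E p q := by
        rw [hE]; dsimp only
        rw [Matrix.single_mul_single_of_ne (c := (1:ℂ)) p q _ hq (1:ℂ),
          Matrix.single_mul_single_of_ne (c := (1:ℂ)) k k _ (Ne.symm hp) (1:ℂ)]
      have e := hcommute _ _ hc
      have e2 : (E p q * hL (E k k)) p q = (hL (E k k) * E p q) p q := by rw [e]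
      simpa [hE] using e2.symm
    -- off-diagonal basis images
    have hcomC : ∀ k l p q : Fin n, k ≠ l → p ≠ l → q ≠ k →
        E p q * hL (E k l) = hL (E k l) * E p q := by
      intro k l p q hkl hp hq
      refine hcommute _ _ ?_
      rw [hE]; dsimp only
      rw [Matrix.single_mul_single_of_ne (c := (1:ℂ)) p q _ hq (1:ℂ),
        Matrix.single_mul_single_of_ne (c := (1:ℂ)) k l _ (Ne.symm hp) (1:ℂ)]
    have factC1 : ∀ k l r s : Fin n, k ≠ l → r ≠ s → s ≠ l → hL (E k l) r s = 0 := by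
      intro k l r s hkl hrs hsl
      have e := hcomC k l s (m k) hkl hsl (hmne k)
      have e2 : (E s (m k) * hL (E k l)) r (m k) = (hL (E k l) * E s (m k)) r (m k) := by rw [e]
      simpa [hE, hrs] using e2.symm
    have factC2 : ∀ k l r s : Fin n, k ≠ l → r ≠ s → r ≠ k → hL (E k l) r s = 0 := by
      intro k l r s hkl hrs hrk
      have e := hcomC k l (m l) r hkl (hmne l) hrk
      have e2 : (E (m l) r * hL (E k l)) (m l) s = (hL (E k l) * E (m l) r) (m l) s := by rw [e]
      simpa [hE, Ne.symm hrs] using e2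
    have factC3 : ∀ k l r : Fin n, k ≠ l → hL (E k l) r r = hL (E k l) k k := by
      intro k l r hkl
      by_cases hrk : r = k
      · rw [hrk]
      · have e := hcomC k l k r hkl hkl hrk
        have e2 : (E k r * hL (E k l)) k r = (hL (E k l) * E k r) k r := by rw [e]
        simpa [hE] using e2
    have factC4 : ∀ k l : Fin n, k ≠ l → hL (E k l) k k = 0 := by
      intro k l hkl
      have hn0 : (n:ℂ) ≠ 0 := Nat.cast_ne_zero.2 (by omega)
      have htrC : Matrix.trace (hL (E k l)) = 0 := by
        rw [htr, hE]; dsimp only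
        rw [Stmt8Aux.trace_E, if_neg hkl]
      have hsum : Matrix.trace (hL (E k l)) = (n:ℂ) * hL (E k l) k k := by
        have : Matrix.trace (hL (E k l)) = ∑ r, hL (E k l) r r := rfl
        rw [this, Finset.sum_congr rfl fun r _ => factC3 k l r hkl, Finset.sum_const,
          Finset.card_univ, Fintype.card_fin, nsmul_eq_mul]
      have := htrC ▸ hsum
      exact (mul_eq_zero.mp this.symm).resolve_left hn0
    have Coff : ∀ k l r s : Fin n, k ≠ l → ¬(r = k ∧ s = l) → hL (E k l) r s = 0 := by
      intro k l r s hkl hne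
      by_cases hrs : r = s
      · subst hrs
        rw [factC3 k l r hkl, factC4 k l hkl]
      · by_cases hsl : s = l
        · exact factC2 k l r s hkl hrs (fun hrk => hne ⟨hrk, hsl⟩)
        · exact factC1 k l r s hkl hrs hsl
    -- link the constants
    have linkk : ∀ k l : Fin n, k ≠ l →
        hL (E k l) k l = hL (E k k) k k - hL (E k k) l l := by
      intro k l hkl
      have e := key (E k k) (E k l)
      have e2 : (E k k * hL (E k l) - hL (E k l) * E k k) k l
          = (hL (E k k) * E k l - E k l * hL (E k k)) k l := by rw [e]
      simp only [Matrix.sub_apply] at e2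
      have t1 : (E k k * hL (E k l)) k l = hL (E k l) k l := by simp [hE]
      have t2 : (hL (E k l) * E k k) k l = 0 := by
        rw [hE]; dsimp only
        exact Matrix.mul_single_apply_of_ne (c := (1:ℂ)) k k k l (Ne.symm hkl) _
      have t3 : (hL (E k k) * E k l) k l = hL (E k k) k k := by simp [hE]
      have t4 : (E k l * hL (E k k)) k l = hL (E k k) l l := by simp [hE]
      rw [t1, t2, t3, t4] at e2
      linear_combination e2
    have linkl : ∀ k l : Fin n, k ≠ l →
        hL (E k l) k l = hL (E l l) l l - hL (E l l) k k := by
      intro k l hkl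
      have e := key (E l l) (E k l)
      have e2 : (E l l * hL (E k l) - hL (E k l) * E l l) k l
          = (hL (E l l) * E k l - E k l * hL (E l l)) k l := by rw [e]
      simp only [Matrix.sub_apply] at e2
      have t1 : (E l l * hL (E k l)) k l = 0 := by
        rw [hE]; dsimp only
        exact Matrix.single_mul_apply_of_ne (c := (1:ℂ)) l l k l hkl _
      have t2 : (hL (E k l) * E l l) k l = hL (E k l) k l := by simp [hE]
      have t3 : (hL (E l l) * E k l) k l = hL (E l l) k k := by simp [hE]
      have t4 : (E k l * hL (E l l)) k l = hL (E l l) l l := by simp [hE]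
      rw [t1, t2, t3, t4] at e2
      linear_combination -e2
    -- constants
    have hn0 : (n:ℂ) ≠ 0 := Nat.cast_ne_zero.2 (by omega)
    set d' : Fin n → ℂ := fun k => hL (E k k) (m k) (m k) with hd'
    have dset : ∀ k q : Fin n, q ≠ k → hL (E k k) q q = d' k := fun k q hq =>
      factB k q (m k) hq (hmne k)
    set b' : Fin n → ℂ := fun k => hL (E k k) k k - d' k with hb'
    have hCb : ∀ k l : Fin n, k ≠ l → hL (E k l) k l = b' k := by
      intro k l hkl
      rw [linkk k l hkl, dset k l (Ne.symm hkl), hb']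
    have hCb2 : ∀ k l : Fin n, k ≠ l → hL (E k l) k l = b' l := by
      intro k l hkl
      rw [linkl k l hkl, dset l k hkl, hb']
    have hbconst : ∀ k, b' k = b' i0 := by
      intro k
      by_cases hk : k = i0
      · rw [hk]
      · rw [← hCb k i0 hk, hCb2 k i0 hk]
    have htrE : ∀ k, Matrix.trace (hL (E k k)) = 1 := by
      intro k
      rw [htr, hE]; dsimp only
      rw [Stmt8Aux.trace_E, if_pos rfl]
    have hdval : ∀ k, (n:ℂ) * d' k + b' i0 = 1 := by
      intro k
      have expand : Matrix.trace (hL (E k k)) = ∑ r, hL (E k k) r r := rfl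
      have card : (Finset.univ.erase k).card = n - 1 := by
        rw [Finset.card_erase_of_mem (Finset.mem_univ k), Finset.card_univ, Fintype.card_fin]
      have hsum : ∑ r, hL (E k k) r r = hL (E k k) k k + ((n:ℂ) - 1) * d' k := by
        rw [← Finset.add_sum_erase _ _ (Finset.mem_univ k)]
        congr 1
        rw [Finset.sum_congr rfl fun r hr => dset k r (Finset.ne_of_mem_erase hr),
          Finset.sum_const, card, nsmul_eq_mul, Nat.cast_sub (by omega : 1 ≤ n), Nat.cast_one]
      have e3 : (1:ℂ) = hL (E k k) k k + ((n:ℂ) - 1) * d' k := by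
        conv_lhs => rw [← htrE k, expand, hsum]
      have e4 : hL (E k k) k k = d' k + b' i0 := by
        rw [← hbconst k, hb']; ring
      rw [e4] at e3
      linear_combination -e3
    set d : ℂ := d' i0 with hd
    have hdk : ∀ k, d' k = d := by
      intro k
      have h1 := hdval k; have h2 := hdval i0
      have : (n:ℂ) * d' k = (n:ℂ) * d := by rw [hd]; linear_combination h1 - h2
      exact mul_left_cancel₀ hn0 this
    have hc1 : b' i0 = 1 - d * (n:ℂ) := by
      have := hdval i0
      rw [← hd] at this
      linear_combination this
    -- entrywise formula on basis matrices
    have Hform : ∀ k l p q : Fin n, hL (E k l) p q =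
        (if k = l ∧ p = q then d else 0) + (if q = l ∧ p = k then (1 - d * (n:ℂ)) else 0) := by
      intro k l p q
      by_cases hkl : k = l
      · subst hkl
        by_cases hpq : p = q
        · subst hpq
          by_cases hpk : p = k
          · subst hpk
            rw [if_pos ⟨rfl, rfl⟩, if_pos ⟨rfl, rfl⟩]
            have e4 : hL (E p p) p p = d' p + b' i0 := by
              rw [← hbconst p, hb']; ring
            rw [e4, hdk, hc1]
          · rw [dset k p hpk, hdk, if_pos ⟨rfl, rfl⟩,
              if_neg (fun hc => hpk hc.2), add_zero]
        · rw [factA k p q hpq, if_neg (fun hc => hpq hc.2),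
            if_neg (fun hc => hpq (hc.2.trans hc.1.symm)), add_zero]
      · rw [if_neg (fun hc => hkl hc.1)]
        by_cases hc : q = l ∧ p = k
        · obtain ⟨rfl, rfl⟩ := hc
          rw [if_pos ⟨rfl, rfl⟩, hCb p q hkl, hbconst, hc1, zero_add]
        · rw [if_neg hc, Coff k l p q hkl (fun h => hc ⟨h.2, h.1⟩), add_zero]
    -- final assembly
    refine ⟨d, fun M => ?_⟩
    have hsb : ∀ (k l : Fin n) (c : ℂ),
        Matrix.single k l c = c • Matrix.single k l (1:ℂ) := by
      intro k l c
      rw [Matrix.smul_single, smul_eq_mul, mul_one]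
    have hM : hL M = ∑ k, ∑ l, M k l • hL (E k l) := by
      conv_lhs => rw [matrix_eq_sum_single M]
      rw [map_sum]
      refine Finset.sum_congr rfl fun k _ => ?_
      rw [map_sum]
      refine Finset.sum_congr rfl fun l _ => ?_
      rw [hsb, _root_.map_smul]
    rw [← hLapp, hM]
    ext p q
    simp only [Matrix.sum_apply, Matrix.smul_apply, smul_eq_mul, Hform, mul_add,
      Finset.sum_add_distrib, mul_ite, mul_zero, ite_and]
    simp only [Finset.sum_ite_eq, Finset.mem_univ, if_true]
    simp only [Matrix.add_apply, Matrix.smul_apply, Matrix.one_apply, smul_eq_mul,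
      Matrix.trace, Matrix.diag]
    by_cases hpq : p = q
    · subst hpq
      simp only [eq_self_iff_true, if_true, mul_one]
      rw [← Finset.sum_mul]
      ring
    · simp only [if_neg hpq, Finset.sum_const_zero, mul_zero, zero_add]
      ring
end

section
/- Let E : M_n → M_m be a linear trace-preserving map (Tr(E(X)) = Tr(X) for all X) and ρ ∈ M_n. Then the Fullwood–Parzygnat state over time E ⋆ ρ = ½{ρ⊗1, D[E]} satisfies the two marginal conditions: the partial trace of E ⋆ ρ over the second tensor factor equals ρ, and the partial trace of E ⋆ ρ over the first tensor factor equals E(ρ). In particular Tr(E ⋆ ρ) = Tr(ρ), so the Fullwood–Parzygnat function is a state over time function. -/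
open Matrix Kronecker BigOperators ComplexOrder

lemma chanState_apply {a b : ℕ} (E : Mat a → Mat b) (i k : Fin a) (j l : Fin b) :
    chanState E (i, j) (k, l) = E (Matrix.single k i (1 : ℂ)) j l := by
  have hM : (Matrix.of fun x y => swapOp a (i, x) (k, y))
      = Matrix.single k i (1 : ℂ) := by
    ext x y
    simp only [Matrix.of_apply, swapOp, Matrix.single]
    by_cases h1 : i = y <;> by_cases h2 : x = k
    · subst h1; subst h2; simp
    · subst h1
      rw [if_neg (by simp [h2]), if_neg]
      rintro ⟨h, -⟩
      exact h2 h.symm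
    · subst h2; simp [h1]
    · simp [h1, h2]
  simp only [chanState, idT, Matrix.of_apply]
  rw [hM]

lemma FP_apply {a b : ℕ} (E : Mat a → Mat b) (ρ : Mat a) (i k : Fin a) (j l : Fin b) :
    FP E ρ (i, j) (k, l) = (1/2 : ℂ) *
      ((∑ c, ρ i c * E (Matrix.single k c (1 : ℂ)) j l) +
       (∑ c, E (Matrix.single c i (1 : ℂ)) j l * ρ c k)) := by
  simp only [FP, Matrix.smul_apply, Matrix.add_apply, Matrix.mul_apply,
    Fintype.sum_prod_type, Matrix.kroneckerMap_apply, Matrix.one_apply,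
    chanState_apply, smul_eq_mul, mul_ite, mul_one, mul_zero, ite_mul, one_mul,
    zero_mul, Finset.sum_ite_eq, Finset.sum_ite_eq', Finset.mem_univ, if_true]

lemma E_entry_sum {a b : ℕ} (E : Mat a → Mat b) (hE : IsLinearMap ℂ E) (ρ : Mat a)
    (j l : Fin b) :
    (∑ i, ∑ c, ρ i c * E (Matrix.single i c (1 : ℂ)) j l) = E ρ j l := by
  have : E ρ = ∑ i, ∑ c, ρ i c • E (Matrix.single i c (1 : ℂ)) := by
    have hsum : ∀ (f : Fin a → Mat a), E (∑ i, f i) = ∑ i, E (f i) := fun f =>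
      map_sum (IsLinearMap.mk' E hE) f Finset.univ
    conv_lhs => rw [Matrix.matrix_eq_sum_single ρ]
    rw [hsum]
    refine Finset.sum_congr rfl fun i _ => ?_
    rw [hsum]
    refine Finset.sum_congr rfl fun c _ => ?_
    rw [← hE.map_smul, Matrix.smul_single, smul_eq_mul, mul_one]
  rw [this]
  simp [Matrix.sum_apply, smul_eq_mul]

/-- for a linear trace-preserving `E : M_n → M_m`, the
Fullwood–Parzygnat state over time `E ⋆ ρ = ½{ρ⊗1, D[E]}` has marginals
`Tr_B(E ⋆ ρ) = ρ`, `Tr_A(E ⋆ ρ) = E(ρ)`, and in particular `Tr(E ⋆ ρ) = Tr ρ`. -/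
theorem stmt_11 (n m : ℕ) (E : Mat n → Mat m) (hE : IsLinearMap ℂ E)
    (htp : ∀ X : Mat n, Matrix.trace (E X) = Matrix.trace X) (ρ : Mat n) :
    ptraceR (FP E ρ) = ρ ∧ ptraceL (FP E ρ) = E ρ ∧
      Matrix.trace (FP E ρ) = Matrix.trace ρ := by
  have htr : ∀ (k c : Fin n), (∑ j, E (Matrix.single k c (1 : ℂ)) j j)
      = if k = c then (1 : ℂ) else 0 := by
    intro k c
    have h := htp (Matrix.single k c (1 : ℂ))
    simp only [Matrix.trace, Matrix.diag] at h
    rw [h]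
    by_cases hkc : k = c
    · subst hkc; simp [Matrix.single]
    · rw [if_neg hkc]
      refine Finset.sum_eq_zero fun x _ => ?_
      simp only [Matrix.single, Matrix.of_apply, ite_eq_right_iff]
      rintro ⟨rfl, rfl⟩
      exact absurd rfl hkc
  have hR : ptraceR (FP E ρ) = ρ := by
    ext i k
    simp only [ptraceR, Matrix.of_apply, FP_apply]
    rw [← Finset.mul_sum, Finset.sum_add_distrib]
    have h1 : (∑ j : Fin m, ∑ c, ρ i c * E (Matrix.single k c (1:ℂ)) j j)
        = ρ i k := by
      rw [Finset.sum_comm]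
      simp only [← Finset.mul_sum, htr]
      simp [eq_comm]
    have h2 : (∑ j : Fin m, ∑ c, E (Matrix.single c i (1:ℂ)) j j * ρ c k)
        = ρ i k := by
      rw [Finset.sum_comm]
      simp only [← Finset.sum_mul, htr]
      simp
    rw [h1, h2]
    ring
  have hL : ptraceL (FP E ρ) = E ρ := by
    ext j l
    simp only [ptraceL, Matrix.of_apply, FP_apply]
    rw [← Finset.mul_sum, Finset.sum_add_distrib]
    have h1 : (∑ i, ∑ c, ρ i c * E (Matrix.single i c (1:ℂ)) j l) = E ρ j l :=
      E_entry_sum E hE ρ j l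
    have h2 : (∑ i, ∑ c, E (Matrix.single c i (1:ℂ)) j l * ρ c i) = E ρ j l := by
      rw [Finset.sum_comm]
      rw [← E_entry_sum E hE ρ j l]
      exact Finset.sum_congr rfl fun c _ => Finset.sum_congr rfl fun i _ => mul_comm _ _
    rw [h1, h2]
    ring
  refine ⟨hR, hL, ?_⟩
  have : Matrix.trace (FP E ρ) = Matrix.trace (ptraceR (FP E ρ)) := by
    simp [Matrix.trace, Matrix.diag, ptraceR, Fintype.sum_prod_type]
  rw [this, hR]
end

section
/- Let E : M_a → M_b be a linear map, let {P_i} be a finite family of mutually orthogonal nonzero orthogonal projections in M_a with Σ_i P_i = 1 and E ∘ (Σ_i Ad_{P_i}) = E, and let {λ_i} be nonnegative reals. Then ½{(Σ_i λ_i P_i/Tr P_i) ⊗ 1, D[E]} = Σ_i λ_i · ½{(P_i/Tr P_i) ⊗ 1, D[E ∘ Ad_{P_i}]}. That is, the Fullwood–Parzygnat state over time function satisfies the classical conditionability axiom (CC). -/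
open Matrix Kronecker BigOperators ComplexOrder

lemma chanState_apply_s13 {a b : ℕ} (E : Mat a → Mat b) (p q : Fin a × Fin b) :
    chanState E p q = E (Matrix.single q.1 p.1 1) p.2 q.2 := by
  have h : (Matrix.of fun x y => swapOp a (p.1, x) (q.1, y)) =
      Matrix.single q.1 p.1 (1:ℂ) := by
    ext x y
    simp only [Matrix.of_apply, swapOp, Matrix.single]
    by_cases h1 : p.1 = y <;> by_cases h2 : x = q.1 <;> simp_all [eq_comm]
  simp only [chanState, idT, Matrix.of_apply, h]

lemma mulL {a b : ℕ} {E : Mat a → Mat b} (hE : IsLinearMap ℂ E) (M : Mat a)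
    (p q : Fin a × Fin b) :
    ((M ⊗ₖ (1 : Mat b)) * chanState E) p q
      = E (Matrix.single q.1 p.1 1 * M) p.2 q.2 := by
  let L := IsLinearMap.mk' E hE
  have hM : Matrix.single q.1 p.1 (1:ℂ) * M
      = ∑ r : Fin a, M p.1 r • Matrix.single q.1 r (1:ℂ) := by
    ext s t
    simp [Matrix.mul_apply, Matrix.single, Finset.mul_sum, ite_and,
      Finset.sum_apply, Matrix.smul_apply, smul_eq_mul, mul_ite]
    by_cases h : q.1 = s <;> simp [Matrix.sum_apply, h]
  have : E (Matrix.single q.1 p.1 1 * M) = ∑ r : Fin a, M p.1 r • E (Matrix.single q.1 r 1) := by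
    rw [hM, show E = ⇑L from rfl, map_sum]
    simp only [_root_.map_smul]
  rw [this, Matrix.mul_apply, Fintype.sum_prod_type]
  simp [Matrix.one_apply, chanState_apply_s13, ite_and, Matrix.sum_apply, mul_comm]

lemma mulR {a b : ℕ} {E : Mat a → Mat b} (hE : IsLinearMap ℂ E) (M : Mat a)
    (p q : Fin a × Fin b) :
    (chanState E * (M ⊗ₖ (1 : Mat b))) p q
      = E (M * Matrix.single q.1 p.1 1) p.2 q.2 := by
  let L := IsLinearMap.mk' E hE
  have hM : M * Matrix.single q.1 p.1 (1:ℂ)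
      = ∑ r : Fin a, M r q.1 • Matrix.single r p.1 (1:ℂ) := by
    ext s t
    simp [Matrix.mul_apply, Matrix.single, Finset.mul_sum, ite_and,
      Finset.sum_apply, Matrix.smul_apply, smul_eq_mul, mul_ite]
    by_cases h : p.1 = t <;> simp [Matrix.sum_apply, h]
  have : E (M * Matrix.single q.1 p.1 1) = ∑ r : Fin a, M r q.1 • E (Matrix.single r p.1 1) := by
    rw [hM, show E = ⇑L from rfl, map_sum]
    simp only [_root_.map_smul]
  rw [this, Matrix.mul_apply, Fintype.sum_prod_type]
  simp [Matrix.one_apply, chanState_apply_s13, ite_and, Matrix.sum_apply, mul_comm]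

lemma sandwich {n : ℕ} (Q R X : Mat n) :
    Q * (X * R + R * X) * Q = Q * X * (R * Q) + (Q * R) * (X * Q) := by
  noncomm_ring

lemma FP_smul {a b : ℕ} (E : Mat a → Mat b) (c : ℂ) (ρ : Mat a) :
    FP E (c • ρ) = c • FP E ρ := by
  unfold FP
  rw [Matrix.smul_kronecker, smul_mul_assoc, mul_smul_comm, ← smul_add, smul_comm]

lemma FP_sum {a b k : ℕ} (E : Mat a → Mat b) (ρ : Fin k → Mat a) :
    FP E (∑ i, ρ i) = ∑ i, FP E (ρ i) := by
  unfold FP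
  have : (∑ i, ρ i) ⊗ₖ (1 : Mat b) = ∑ i, ρ i ⊗ₖ (1 : Mat b) := by
    ext p q
    simp [Matrix.kroneckerMap_apply, Matrix.sum_apply, Finset.sum_mul]
  rw [this, Finset.sum_mul, Finset.mul_sum, ← Finset.sum_add_distrib, Finset.smul_sum]


/-- the Fullwood–Parzygnat state over time function satisfies the
classical conditionability axiom (CC). -/
theorem stmt_13 (a b k : ℕ) (E : Mat a → Mat b) (hE : IsLinearMap ℂ E)
    (P : Fin k → Mat a) (hproj : ∀ i, IsOrthProj (P i))
    (horth : ∀ i j, i ≠ j → P i * P j = 0)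
    (hne : ∀ i, P i ≠ 0) (hsum : ∑ i, P i = 1)
    (hdec : ∀ X : Mat a, E (∑ i, P i * X * P i) = E X)
    (lam : Fin k → ℝ) (hlam : ∀ i, 0 ≤ lam i) :
    FP E (∑ i, ((lam i : ℂ) * (Matrix.trace (P i))⁻¹) • P i) =
      ∑ i, (lam i : ℂ) •
        FP (fun X => E (P i * X * P i)) ((Matrix.trace (P i))⁻¹ • P i) := by
  have hEi : ∀ i, IsLinearMap ℂ (fun X => E (P i * X * P i)) := by
    intro i
    constructor
    · intro X Y
      rw [mul_add, add_mul, hE.map_add]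
    · intro c X
      rw [mul_smul_comm, smul_mul_assoc, hE.map_smul]
  have key : ∀ i (X : Mat a),
      E (X * P i + P i * X) = E (P i * X * P i) + E (P i * X * P i) := by
    intro i X
    rw [← hdec (X * P i + P i * X)]
    have hsum2 : ∑ j, P j * (X * P i + P i * X) * P j
        = P i * X * P i + P i * X * P i := by
      rw [Finset.sum_eq_single i]
      · have hP := (hproj i).2
        rw [sandwich, hP, ← mul_assoc]
      · intro j _ hji
        have h1 : P i * P j = 0 := horth i j (fun h => hji h.symm)
        have h2 : P j * P i = 0 := horth j i hji
        rw [sandwich, h1, h2, mul_zero, zero_mul, add_zero]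
      · intro h; exact absurd (Finset.mem_univ i) h
    rw [hsum2, hE.map_add]
  have anticomm : ∀ i,
      (P i ⊗ₖ (1 : Mat b)) * chanState E + chanState E * (P i ⊗ₖ (1 : Mat b))
      = (P i ⊗ₖ (1 : Mat b)) * chanState (fun X => E (P i * X * P i))
        + chanState (fun X => E (P i * X * P i)) * (P i ⊗ₖ (1 : Mat b)) := by
    intro i
    ext p q
    rw [Matrix.add_apply, Matrix.add_apply, mulL hE, mulR hE, mulL (hEi i), mulR (hEi i)]
    have hP := (hproj i).2
    set B := Matrix.single q.1 p.1 (1:ℂ) with hB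
    have e1 : P i * (B * P i) * P i = P i * B * P i := by
      rw [← mul_assoc, mul_assoc (P i * B) (P i) (P i), hP]
    have e2 : P i * (P i * B) * P i = P i * B * P i := by
      rw [← mul_assoc, hP]
    rw [e1, e2, ← Matrix.add_apply, ← hE.map_add, key i B, Matrix.add_apply]
  have hFP : ∀ i, FP E (P i) = FP (fun X => E (P i * X * P i)) (P i) := by
    intro i
    unfold FP
    rw [anticomm i]
  calc FP E (∑ i, ((lam i : ℂ) * (Matrix.trace (P i))⁻¹) • P i)
      = ∑ i, ((lam i : ℂ) * (Matrix.trace (P i))⁻¹) • FP E (P i) := by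
        rw [FP_sum]
        exact Finset.sum_congr rfl fun i _ => FP_smul E _ _
    _ = ∑ i, (lam i : ℂ) •
        FP (fun X => E (P i * X * P i)) ((Matrix.trace (P i))⁻¹ • P i) := by
        refine Finset.sum_congr rfl fun i _ => ?_
        rw [hFP i, FP_smul, smul_smul]
end
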